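/- arXiv:1807.06165 — 2 statements merged into one kernel-verified Lean document; each statement's English description precedes it below -/
import Mathlib

section
/- There exists exactly one Borel probability measure on ℤ₂ that is stationary for the primal kernel K. -/
open MeasureTheory
open scoped ENNReal Classical

noncomputable instance : MeasurableSpace ℤ_[2] := borel ℤ_[2]
instance : BorelSpace ℤ_[2] := ⟨rfl⟩

/-- The unique `c` with `2 * c = a`, when `2 ∣ a` (and `0` otherwise). -/
noncomputable def half (a : ℤ_[2]) : ℤ_[2] :=
  if h : (2 : ℤ_[2]) ∣ a then h.choose else 0

open Topology

/-- The primal kernel `K`. -/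
noncomputable def primalK (a : ℤ_[2]) : Measure ℤ_[2] :=
  if (2 : ℤ_[2]) ∣ a then
    (4 : ℝ≥0∞)⁻¹ • (Measure.dirac (a + 1) + Measure.dirac (a - 1)
      + Measure.dirac (2 * a) + Measure.dirac (half a))
  else
    (3 : ℝ≥0∞)⁻¹ • (Measure.dirac (a + 1) + Measure.dirac (a - 1) + Measure.dirac (2 * a))

/-- Stationarity of a Borel measure on `ℤ₂` for the primal kernel. -/
def IsStationaryPrimal (μ : Measure ℤ_[2]) : Prop :=
  ∀ A : Set ℤ_[2], MeasurableSet A → μ A = ∫⁻ a, primalK a A ∂μ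

namespace PK
open scoped NNReal

lemma twoNZ : (2 : ℤ_[2]) ≠ 0 := by
  intro h
  have := congrArg (fun z : ℤ_[2] => ‖z‖) h
  simp [PadicInt.norm_p (p := 2)] at this

lemma half_spec {a : ℤ_[2]} (h : (2:ℤ_[2]) ∣ a) : 2 * half a = a := by
  rw [half, dif_pos h]
  exact h.choose_spec.symm

lemma half_eq {a c : ℤ_[2]} (h : a = 2 * c) : half a = c := by
  have h2 : (2:ℤ_[2]) ∣ a := ⟨c, h⟩
  have h3 : 2 * half a = 2 * c := by rw [half_spec h2, h]
  exact mul_left_cancel₀ twoNZ h3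

lemma halfSub {x y : ℤ_[2]} (hx : (2:ℤ_[2]) ∣ x) (hy : (2:ℤ_[2]) ∣ y) :
    half x - half y = half (x - y) := by
  have : x - y = 2 * (half x - half y) := by
    rw [mul_sub, half_spec hx, half_spec hy]
  rw [half_eq this]

lemma dvd_iff_toZMod {x : ℤ_[2]} : (2:ℤ_[2]) ∣ x ↔ (PadicInt.toZMod x : ZMod 2) = 0 := by
  have : ((PadicInt.toZMod x : ZMod 2) = 0) ↔ x ∈ RingHom.ker (PadicInt.toZMod : ℤ_[2] →+* ZMod 2) :=
    Iff.rfl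
  rw [this, PadicInt.ker_toZMod, PadicInt.maximalIdeal_eq_span_p, Ideal.mem_span_singleton]
  norm_num

lemma parity_add_one {x : ℤ_[2]} (h : ¬ (2:ℤ_[2]) ∣ x) : (2:ℤ_[2]) ∣ (x + 1) := by
  rw [dvd_iff_toZMod] at h ⊢
  have h1 : (PadicInt.toZMod x : ZMod 2) = 1 := by
    revert h; generalize (PadicInt.toZMod x : ZMod 2) = a; revert a; decide
  rw [map_add, map_one, h1]; decide

lemma parity_sub_one {x : ℤ_[2]} (h : ¬ (2:ℤ_[2]) ∣ x) : (2:ℤ_[2]) ∣ (x - 1) := by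
  rw [dvd_iff_toZMod] at h ⊢
  have h1 : (PadicInt.toZMod x : ZMod 2) = 1 := by
    revert h; generalize (PadicInt.toZMod x : ZMod 2) = a; revert a; decide
  rw [map_sub, map_one, h1]; decide

lemma not_dvd_add_one {x : ℤ_[2]} (h : (2:ℤ_[2]) ∣ x) : ¬ (2:ℤ_[2]) ∣ (x + 1) := by
  rw [dvd_iff_toZMod] at h ⊢
  rw [map_add, map_one, h]; decide

lemma not_dvd_sub_one {x : ℤ_[2]} (h : (2:ℤ_[2]) ∣ x) : ¬ (2:ℤ_[2]) ∣ (x - 1) := by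
  rw [dvd_iff_toZMod] at h ⊢
  rw [map_sub, map_one, h]; decide

lemma dvd_two_mul (x : ℤ_[2]) : (2:ℤ_[2]) ∣ 2 * x := ⟨x, rfl⟩

-- norms
lemma norm_two : ‖(2:ℤ_[2])‖ = 1/2 := by
  have := PadicInt.norm_p (p := 2)
  norm_num at this ⊢
  exact this

lemma norm_two_mul (x : ℤ_[2]) : ‖2 * x‖ = ‖x‖ / 2 := by
  rw [norm_mul, norm_two]
  ring

lemma norm_odd {d : ℤ_[2]} (h : ¬ (2:ℤ_[2]) ∣ d) : ‖d‖ = 1 := by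
  refine le_antisymm (PadicInt.norm_le_one d) ?_
  by_contra hlt
  push_neg at hlt
  exact h ((PadicInt.norm_lt_one_iff_dvd d).1 hlt)

lemma norm_dvd_le {d : ℤ_[2]} (h : (2:ℤ_[2]) ∣ d) : ‖d‖ ≤ 1/2 := by
  obtain ⟨c, rfl⟩ := h
  rw [norm_two_mul]
  have := PadicInt.norm_le_one c
  linarith

lemma norm_half {x : ℤ_[2]} (h : (2:ℤ_[2]) ∣ x) : ‖half x‖ = 2 * ‖x‖ := by
  conv_rhs => rw [← half_spec h]
  rw [norm_two_mul]
  ring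


/-- the single-step map of the chain, 12 equally likely moves -/
noncomputable def step (x : ℤ_[2]) (j : Fin 12) : ℤ_[2] :=
  if (2:ℤ_[2]) ∣ x then
    if (j:ℕ) < 3 then x+1 else if (j:ℕ) < 6 then x-1 else if (j:ℕ) < 9 then 2*x else half x
  else
    if (j:ℕ) < 4 then x+1 else if (j:ℕ) < 8 then x-1 else 2*x

/-- contraction factor of one coordinate: `2 ^ (-1/8)` -/
noncomputable def Wc : ℝ := (2:ℝ) ^ (-(1/8) : ℝ)

/-- Lyapunov/contraction weight for the coupled chain -/
noncomputable def Wf (x y : ℤ_[2]) : ℝ :=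
  ‖x - y‖ ^ ((1/8 : ℝ)) * (if (2:ℤ_[2]) ∣ x then 1 else (199/200 : ℝ))

/-- iteration contraction rate -/
noncomputable def lam : ℝ := 1999/2000

lemma Wc_pow : Wc ^ (8:ℕ) = 1/2 := by
  rw [Wc, ← Real.rpow_natCast ((2:ℝ) ^ (-(1/8):ℝ)) 8, ← Real.rpow_mul (by norm_num)]
  norm_num

lemma Wc_pos : 0 < Wc := Real.rpow_pos_of_pos (by norm_num) _

lemma Wc_ub : Wc ≤ 0.9171 := by
  have h8 : Wc ^ (8:ℕ) ≤ (0.9171:ℝ) ^ (8:ℕ) := by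
    rw [Wc_pow]; norm_num
  exact le_of_pow_le_pow_left₀ (by norm_num) (by norm_num) h8

lemma Wc_lb : (0.9169:ℝ) ≤ Wc := by
  by_contra hlt
  push_neg at hlt
  have h8 : Wc ^ (8:ℕ) ≤ (0.9169:ℝ)^(8:ℕ) :=
    pow_le_pow_left₀ Wc_pos.le hlt.le 8
  rw [Wc_pow] at h8
  norm_num at h8

lemma norm_rpow_nonneg (d : ℤ_[2]) : 0 ≤ ‖d‖ ^ ((1/8:ℝ)) := Real.rpow_nonneg (norm_nonneg d) _

lemma norm_rpow_le_one (d : ℤ_[2]) : ‖d‖ ^ ((1/8:ℝ)) ≤ 1 :=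
  Real.rpow_le_one (norm_nonneg d) (PadicInt.norm_le_one d) (by norm_num)

lemma rpow_two_mul (d : ℤ_[2]) : ‖2*d‖ ^ ((1/8:ℝ)) = ‖d‖ ^ ((1/8:ℝ)) * Wc := by
  rw [norm_two_mul, div_eq_mul_inv, Real.mul_rpow (norm_nonneg d) (by norm_num), Wc]
  congr 1
  rw [← Real.rpow_neg_one (2:ℝ), ← Real.rpow_mul (by norm_num : (0:ℝ) ≤ 2)]
  norm_num

lemma rpow_half (d : ℤ_[2]) (hd : (2:ℤ_[2]) ∣ d) :
    ‖half d‖ ^ ((1/8:ℝ)) = ‖d‖ ^ ((1/8:ℝ)) / Wc := by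
  have h2 : ‖half d‖ = 2 * ‖d‖ := norm_half hd
  rw [h2, Real.mul_rpow (by norm_num) (norm_nonneg d)]
  have : (2:ℝ) ^ ((1/8:ℝ)) = Wc⁻¹ := by
    rw [Wc, ← Real.rpow_neg (by norm_num)]
    norm_num
  rw [this]
  field_simp [Wc_pos.ne']

lemma Wf_nonneg (x y : ℤ_[2]) : 0 ≤ Wf x y := by
  unfold Wf
  rcases Classical.em ((2:ℤ_[2]) ∣ x) with h | h <;> simp [h] <;> positivity

lemma Wf_le_one (x y : ℤ_[2]) : Wf x y ≤ 1 := by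
  unfold Wf
  rcases Classical.em ((2:ℤ_[2]) ∣ x) with h | h
  · rw [if_pos h, mul_one]
    exact norm_rpow_le_one _
  · rw [if_neg h]
    nlinarith [norm_rpow_le_one (x-y), norm_rpow_nonneg (x-y)]

lemma Wf_le_a {x : ℤ_[2]} (hx : ¬ (2:ℤ_[2]) ∣ x) (y : ℤ_[2]) : Wf x y ≤ 199/200 := by
  unfold Wf
  rw [if_neg hx]
  nlinarith [norm_rpow_le_one (x-y), norm_rpow_nonneg (x-y)]

/-- THE key one-step contraction estimate for the coupled chain. -/
lemma key (x y : ℤ_[2]) :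
    ∑ j : Fin 12, Wf (step x j) (step y j) ≤ 12 * lam * Wf x y := by
  have hWc1 := Wc_ub
  have hWc2 := Wc_lb
  have hWcp := Wc_pos
  rcases Classical.em ((2:ℤ_[2]) ∣ x) with hx | hx <;>
    rcases Classical.em ((2:ℤ_[2]) ∣ y) with hy | hy
  · -- Case A : both even
    have hd : (2:ℤ_[2]) ∣ (x - y) := dvd_sub hx hy
    have hsum : ∑ j : Fin 12, Wf (step x j) (step y j)
        = 3 * Wf (x+1) (y+1) + 3 * Wf (x-1) (y-1) + 3 * Wf (2*x) (2*y)
          + 3 * Wf (half x) (half y) := by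
      simp only [Fin.sum_univ_succ, Fin.sum_univ_zero, step, if_pos hx, if_pos hy]
      norm_num
      ring
    rw [hsum]
    set N := ‖x - y‖ ^ ((1/8:ℝ)) with hN
    have hNn : 0 ≤ N := norm_rpow_nonneg _
    have h1 : Wf (x+1) (y+1) = N * (199/200) := by
      unfold Wf
      rw [if_neg (not_dvd_add_one hx)]
      congr 2
      ring_nf
    have h2 : Wf (x-1) (y-1) = N * (199/200) := by
      unfold Wf
      rw [if_neg (not_dvd_sub_one hx)]
      congr 2
      ring_nf
    have h3 : Wf (2*x) (2*y) = N * Wc := by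
      unfold Wf
      rw [if_pos ⟨x, rfl⟩, mul_one]
      rw [show 2*x - 2*y = 2*(x-y) by ring, rpow_two_mul]
    have h4 : Wf (half x) (half y) ≤ N / Wc := by
      have hle : Wf (half x) (half y) ≤ ‖half x - half y‖ ^ ((1/8:ℝ)) := by
        unfold Wf
        rcases Classical.em ((2:ℤ_[2]) ∣ half x) with h | h
        · rw [if_pos h, mul_one]
        · rw [if_neg h]
          nlinarith [norm_rpow_nonneg (half x - half y)]
      rw [halfSub hx hy, rpow_half _ hd] at hle
      exact hle
    have hW : Wf x y = N := by
      unfold Wf; rw [if_pos hx, mul_one]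
    rw [hW, h1, h2, h3]
    unfold lam
    have hdivle : N / Wc ≤ N * 1.0907 := by
      have h1 : N / Wc ≤ N / 0.9169 := by
        apply div_le_div_of_nonneg_left hNn (by norm_num) hWc2
      have h2 : N / 0.9169 ≤ N * 1.0907 := by
        rw [div_le_iff₀ (by norm_num)]
        nlinarith
      linarith
    have h3' : 3 * (N * Wc) ≤ 3 * (N * 0.9171) := by nlinarith
    nlinarith [h4]
  · -- Case D : x even, y odd
    have hd : ¬ (2:ℤ_[2]) ∣ (x - y) := by
      intro h
      exact hy (by simpa using dvd_sub hx h)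
    have hdn : ‖x - y‖ = 1 := norm_odd hd
    have hsum : ∑ j : Fin 12, Wf (step x j) (step y j)
        = Wf (x+1) (y+1) + Wf (x+1) (y+1) + Wf (x+1) (y+1)
          + Wf (x-1) (y+1) + Wf (x-1) (y-1) + Wf (x-1) (y-1)
          + Wf (2*x) (y-1) + Wf (2*x) (y-1) + Wf (2*x) (2*y)
          + Wf (half x) (2*y) + Wf (half x) (2*y) + Wf (half x) (2*y) := by
      simp only [Fin.sum_univ_succ, Fin.sum_univ_zero, step, if_pos hx, if_neg hy]
      norm_num
      ring
    rw [hsum]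
    have ha1 : Wf (x+1) (y+1) ≤ 199/200 := Wf_le_a (not_dvd_add_one hx) _
    have ha2 : Wf (x-1) (y+1) ≤ 199/200 := Wf_le_a (not_dvd_sub_one hx) _
    have ha3 : Wf (x-1) (y-1) ≤ 199/200 := Wf_le_a (not_dvd_sub_one hx) _
    have hb1 : Wf (2*x) (y-1) ≤ 1 := Wf_le_one _ _
    have hb2 : Wf (half x) (2*y) ≤ 1 := Wf_le_one _ _
    have hc : Wf (2*x) (2*y) = Wc := by
      unfold Wf
      rw [if_pos ⟨x, rfl⟩, mul_one, show 2*x - 2*y = 2*(x-y) by ring, rpow_two_mul, hdn]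
      simp [Real.one_rpow]
    have hW : Wf x y = 1 := by
      unfold Wf; rw [if_pos hx, hdn, Real.one_rpow, mul_one]
    rw [hW, hc]
    unfold lam
    linarith
  · -- Case C : x odd, y even
    have hd : ¬ (2:ℤ_[2]) ∣ (x - y) := by
      intro h
      exact hx (by simpa using dvd_add h hy)
    have hdn : ‖x - y‖ = 1 := norm_odd hd
    have hsum : ∑ j : Fin 12, Wf (step x j) (step y j)
        = Wf (x+1) (y+1) + Wf (x+1) (y+1) + Wf (x+1) (y+1)
          + Wf (x+1) (y-1) + Wf (x-1) (y-1) + Wf (x-1) (y-1)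
          + Wf (x-1) (2*y) + Wf (x-1) (2*y) + Wf (2*x) (2*y)
          + Wf (2*x) (half y) + Wf (2*x) (half y) + Wf (2*x) (half y) := by
      simp only [Fin.sum_univ_succ, Fin.sum_univ_zero, step, if_neg hx, if_pos hy]
      norm_num
      ring
    rw [hsum]
    have hb1 : Wf (x+1) (y+1) ≤ 1 := Wf_le_one _ _
    have hb2 : Wf (x+1) (y-1) ≤ 1 := Wf_le_one _ _
    have hb3 : Wf (x-1) (y-1) ≤ 1 := Wf_le_one _ _
    have hb4 : Wf (x-1) (2*y) ≤ 1 := Wf_le_one _ _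
    have hb5 : Wf (2*x) (half y) ≤ 1 := Wf_le_one _ _
    have hc : Wf (2*x) (2*y) = Wc := by
      unfold Wf
      rw [if_pos ⟨x, rfl⟩, mul_one, show 2*x - 2*y = 2*(x-y) by ring, rpow_two_mul, hdn]
      simp [Real.one_rpow]
    have hW : Wf x y = 199/200 := by
      unfold Wf; rw [if_neg hx, hdn, Real.one_rpow, one_mul]
    rw [hW, hc]
    unfold lam
    linarith
  · -- Case B : both odd
    have hd : (2:ℤ_[2]) ∣ (x - y) := by
      have h1 := parity_sub_one hx
      have h2 := parity_sub_one hy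
      have := dvd_sub h1 h2
      simpa using this
    have hsum : ∑ j : Fin 12, Wf (step x j) (step y j)
        = 4 * Wf (x+1) (y+1) + 4 * Wf (x-1) (y-1) + 4 * Wf (2*x) (2*y) := by
      simp only [Fin.sum_univ_succ, Fin.sum_univ_zero, step, if_neg hx, if_neg hy]
      norm_num
      ring
    rw [hsum]
    set N := ‖x - y‖ ^ ((1/8:ℝ)) with hN
    have hNn : 0 ≤ N := norm_rpow_nonneg _
    have h1 : Wf (x+1) (y+1) = N := by
      unfold Wf
      rw [if_pos (parity_add_one hx), mul_one]
      congr 2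
      ring_nf
    have h2 : Wf (x-1) (y-1) = N := by
      unfold Wf
      rw [if_pos (parity_sub_one hx), mul_one]
      congr 2
      ring_nf
    have h3 : Wf (2*x) (2*y) = N * Wc := by
      unfold Wf
      rw [if_pos ⟨x, rfl⟩, mul_one, show 2*x - 2*y = 2*(x-y) by ring, rpow_two_mul]
    have hW : Wf x y = N * (199/200) := by
      unfold Wf; rw [if_neg hx]
    rw [hW, h1, h2, h3]
    unfold lam
    nlinarith [mul_le_mul_of_nonneg_left hWc1 hNn]


-- ### Part 3 : the averaging operator and Lipschitz propagation

/-- one-step averaging (transition) operator -/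
noncomputable def Qop (f : ℤ_[2] → ℝ) : ℤ_[2] → ℝ := fun x => (∑ j : Fin 12, f (step x j)) / 12

/-- Lipschitz property relative to the weight `Wf` -/
def WLip (c : ℝ) (f : ℤ_[2] → ℝ) : Prop := ∀ u v, |f u - f v| ≤ c * Wf u v

lemma lam_pos : (0:ℝ) < lam := by unfold lam; norm_num
lemma lam_lt_one : lam < 1 := by unfold lam; norm_num

lemma WLip.qop {c : ℝ} {f : ℤ_[2] → ℝ} (h : WLip c f) (hc : 0 ≤ c) :
    WLip (lam * c) (Qop f) := by
  intro u v
  have habs : |Qop f u - Qop f v| ≤ (∑ j : Fin 12, |f (step u j) - f (step v j)|) / 12 := by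
    unfold Qop
    rw [div_sub_div_same, abs_div]
    simp only [abs_of_nonneg (show (0:ℝ) ≤ 12 by norm_num)]
    gcongr
    rw [← Finset.sum_sub_distrib]
    exact Finset.abs_sum_le_sum_abs _ _
  have hterm : ∑ j : Fin 12, |f (step u j) - f (step v j)|
      ≤ ∑ j : Fin 12, c * Wf (step u j) (step v j) :=
    Finset.sum_le_sum (fun j _ => h _ _)
  have hkey : ∑ j : Fin 12, c * Wf (step u j) (step v j) ≤ c * (12 * lam * Wf u v) := by
    rw [← Finset.mul_sum]
    exact mul_le_mul_of_nonneg_left (key u v) hc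
  calc |Qop f u - Qop f v| ≤ (∑ j : Fin 12, |f (step u j) - f (step v j)|) / 12 := habs
    _ ≤ (c * (12 * lam * Wf u v)) / 12 := by
        gcongr
        exact le_trans hterm hkey
    _ = lam * c * Wf u v := by ring

lemma WLip.qop_iter {c : ℝ} {f : ℤ_[2] → ℝ} (h : WLip c f) (hc : 0 ≤ c) (n : ℕ) :
    WLip (lam ^ n * c) (Qop^[n] f) := by
  induction n with
  | zero => simpa using h
  | succ n ih =>
      rw [Function.iterate_succ']
      have := ih.qop (mul_nonneg (pow_nonneg lam_pos.le n) hc)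
      rw [show lam * (lam ^ n * c) = lam ^ (n+1) * c by ring] at this
      exact this

lemma Qop_bounds {f : ℤ_[2] → ℝ} {lo hi : ℝ} (h : ∀ x, lo ≤ f x ∧ f x ≤ hi) :
    ∀ x, lo ≤ Qop f x ∧ Qop f x ≤ hi := by
  intro x
  constructor
  · unfold Qop
    rw [le_div_iff₀ (by norm_num : (0:ℝ) < 12)]
    calc lo * 12 = ∑ _j : Fin 12, lo := by simp; ring
      _ ≤ ∑ j : Fin 12, f (step x j) := Finset.sum_le_sum (fun j _ => (h _).1)
  · unfold Qop
    rw [div_le_iff₀ (by norm_num : (0:ℝ) < 12)]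
    calc ∑ j : Fin 12, f (step x j) ≤ ∑ _j : Fin 12, hi :=
          Finset.sum_le_sum (fun j _ => (h _).2)
      _ = hi * 12 := by simp; ring

lemma Qop_iter_bounds {f : ℤ_[2] → ℝ} {lo hi : ℝ} (h : ∀ x, lo ≤ f x ∧ f x ≤ hi) (n : ℕ) :
    ∀ x, lo ≤ Qop^[n] f x ∧ Qop^[n] f x ≤ hi := by
  induction n with
  | zero => simpa using h
  | succ n ih =>
      rw [Function.iterate_succ']
      exact Qop_bounds ih

lemma Qop_add (f g : ℤ_[2] → ℝ) : Qop (fun x => f x + g x) = fun x => Qop f x + Qop g x := by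
  funext x
  unfold Qop
  rw [Finset.sum_add_distrib]
  ring

lemma Qop_smul (r : ℝ) (f : ℤ_[2] → ℝ) : Qop (fun x => r * f x) = fun x => r * Qop f x := by
  funext x
  unfold Qop
  rw [← Finset.mul_sum]
  ring

lemma Qop_mono {f g : ℤ_[2] → ℝ} (h : ∀ x, f x ≤ g x) : ∀ x, Qop f x ≤ Qop g x := by
  intro x
  unfold Qop
  gcongr with j hj
  exact h _

-- ### measurability

lemma dvd_iff_norm_le {x : ℤ_[2]} : (2:ℤ_[2]) ∣ x ↔ ‖x‖ ≤ 1/2 := by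
  constructor
  · exact norm_dvd_le
  · intro h
    exact (PadicInt.norm_lt_one_iff_dvd x).1 (lt_of_le_of_lt h (by norm_num))

lemma measurableSet_even : MeasurableSet {x : ℤ_[2] | (2:ℤ_[2]) ∣ x} := by
  have : {x : ℤ_[2] | (2:ℤ_[2]) ∣ x} = (fun x : ℤ_[2] => ‖x‖) ⁻¹' (Set.Iic (1/2)) := by
    ext x
    simp [dvd_iff_norm_le]
  rw [this]
  exact (continuous_norm.measurable) measurableSet_Iic

lemma isClosedEmbedding_double : IsClosedEmbedding (fun c : ℤ_[2] => 2 * c) := by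
  apply Continuous.isClosedEmbedding
  · exact continuous_const.mul continuous_id
  · intro a b hab
    exact mul_left_cancel₀ twoNZ hab

lemma half_eq_extend : half = Function.extend (fun c : ℤ_[2] => 2 * c) id (fun _ => 0) := by
  funext x
  rcases Classical.em ((2:ℤ_[2]) ∣ x) with h | h
  · obtain ⟨c, rfl⟩ := h
    rw [Function.Injective.extend_apply]
    · exact half_eq rfl
    · intro a b hab
      exact mul_left_cancel₀ twoNZ hab
  · rw [Function.extend_apply']
    · rw [half, dif_neg h]
    · rintro ⟨c, hc⟩
      exact h ⟨c, hc.symm⟩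

lemma measurable_half : Measurable half := by
  rw [half_eq_extend]
  exact (isClosedEmbedding_double.measurableEmbedding).measurable_extend
    measurable_id measurable_const

lemma measurable_step (j : Fin 12) : Measurable (fun x => step x j) := by
  unfold step
  apply Measurable.ite measurableSet_even
  · split_ifs
    · exact measurable_id.add_const 1
    · exact measurable_id.sub_const 1
    · exact measurable_const.mul measurable_id
    · exact measurable_half
  · split_ifs
    · exact measurable_id.add_const 1
    · exact measurable_id.sub_const 1
    · exact measurable_const.mul measurable_id

lemma measurable_Qop {f : ℤ_[2] → ℝ} (hf : Measurable f) : Measurable (Qop f) := by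
  unfold Qop
  apply Measurable.div_const
  exact Finset.measurable_sum _ (fun j _ => hf.comp (measurable_step j))

lemma measurable_Qop_iter {f : ℤ_[2] → ℝ} (hf : Measurable f) (n : ℕ) :
    Measurable (Qop^[n] f) := by
  induction n with
  | zero => simpa using hf
  | succ n ih =>
      rw [Function.iterate_succ']
      exact measurable_Qop ih

-- ### Part 4 : cylinder sets

/-- `S` is a union of cosets of `2^n ℤ₂`. -/
def IsCyl (n : ℕ) (S : Set ℤ_[2]) : Prop :=
  ∀ x ∈ S, ∀ y : ℤ_[2], (2:ℤ_[2])^n ∣ (y - x) → y ∈ S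

lemma pow_dvd_iff_norm_le {n : ℕ} {z : ℤ_[2]} :
    (2:ℤ_[2])^n ∣ z ↔ ‖z‖ ≤ (1/2:ℝ)^n := by
  have h := PadicInt.norm_le_pow_iff_mem_span_pow z n (p := 2)
  rw [Ideal.mem_span_singleton] at h
  have hc : ((2:ℕ):ℤ_[2]) = (2:ℤ_[2]) := by norm_num
  have hr : ((2:ℕ):ℝ) ^ (-(n:ℤ)) = (1/2:ℝ)^n := by
    push_cast
    rw [zpow_neg, zpow_natCast, one_div, inv_pow]
  rw [hc] at h
  rw [← h, hr]

lemma IsCyl.mem_of_dvd {n : ℕ} {S : Set ℤ_[2]} (h : IsCyl n S) {x y : ℤ_[2]}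
    (hx : x ∈ S) (hd : (2:ℤ_[2])^n ∣ (y - x)) : y ∈ S := h x hx y hd

lemma IsCyl.mono {n m : ℕ} (hnm : n ≤ m) {S : Set ℤ_[2]} (h : IsCyl n S) : IsCyl m S := by
  intro x hx y hd
  exact h x hx y (dvd_trans (pow_dvd_pow _ hnm) hd)

lemma IsCyl.compl {n : ℕ} {S : Set ℤ_[2]} (h : IsCyl n S) : IsCyl n Sᶜ := by
  intro x hx y hd
  intro hy
  exact hx (h y hy x (by simpa using (dvd_neg.2 hd)))

lemma IsCyl.union {n : ℕ} {S T : Set ℤ_[2]} (hS : IsCyl n S) (hT : IsCyl n T) :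
    IsCyl n (S ∪ T) := by
  rintro x (hx | hx) y hd
  · exact Or.inl (hS x hx y hd)
  · exact Or.inr (hT x hx y hd)

lemma IsCyl.inter {n : ℕ} {S T : Set ℤ_[2]} (hS : IsCyl n S) (hT : IsCyl n T) :
    IsCyl n (S ∩ T) := by
  rintro x ⟨hx1, hx2⟩ y hd
  exact ⟨hS x hx1 y hd, hT x hx2 y hd⟩

lemma isCyl_univ (n : ℕ) : IsCyl n (Set.univ : Set ℤ_[2]) := by intro x _ y _; trivial

lemma isCyl_empty (n : ℕ) : IsCyl n (∅ : Set ℤ_[2]) := by intro x hx; exact absurd hx (by simp)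

lemma IsCyl.isOpen {n : ℕ} {S : Set ℤ_[2]} (h : IsCyl n S) : IsOpen S := by
  rw [Metric.isOpen_iff]
  intro x hx
  refine ⟨(1/2:ℝ)^n, by positivity, ?_⟩
  intro y hy
  apply h x hx y
  rw [pow_dvd_iff_norm_le]
  rw [Metric.mem_ball, dist_eq_norm] at hy
  exact hy.le

lemma IsCyl.isClopen {n : ℕ} {S : Set ℤ_[2]} (h : IsCyl n S) : IsClopen S :=
  ⟨⟨by simpa using h.compl.isOpen⟩, h.isOpen⟩

lemma IsCyl.measurableSet {n : ℕ} {S : Set ℤ_[2]} (h : IsCyl n S) : MeasurableSet S :=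
  h.isOpen.measurableSet

lemma IsCyl.isCompact {n : ℕ} {S : Set ℤ_[2]} (h : IsCyl n S) : IsCompact S :=
  h.isClopen.isClosed.isCompact

/-- real indicator function -/
noncomputable def indC (S : Set ℤ_[2]) : ℤ_[2] → ℝ := fun x => if x ∈ S then 1 else 0

lemma indC_nonneg (S : Set ℤ_[2]) (x : ℤ_[2]) : 0 ≤ indC S x := by
  unfold indC; split_ifs <;> norm_num

lemma indC_le_one (S : Set ℤ_[2]) (x : ℤ_[2]) : indC S x ≤ 1 := by
  unfold indC; split_ifs <;> norm_num

/-- the `Wf`-Lipschitz constant associated with level `n` cylinders -/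
noncomputable def cL (n : ℕ) : ℝ := (200/199) / ((1/2:ℝ)^n) ^ ((1/8:ℝ))

lemma cL_pos (n : ℕ) : 0 < cL n := by
  unfold cL
  positivity

lemma indC_wlip {n : ℕ} {S : Set ℤ_[2]} (h : IsCyl n S) : WLip (cL n) (indC S) := by
  have main : ∀ u v : ℤ_[2], u ∈ S → v ∉ S → 1 ≤ cL n * Wf u v := by
    intro u v hu hv
    have hd : ¬ (2:ℤ_[2])^n ∣ (v - u) := fun hdvd => hv (h u hu v hdvd)
    rw [pow_dvd_iff_norm_le] at hd
    push_neg at hd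
    have hnorm : (1/2:ℝ)^n ≤ ‖u - v‖ := by
      rw [norm_sub_rev]; exact hd.le
    have hrp : ((1/2:ℝ)^n) ^ ((1/8:ℝ)) ≤ ‖u - v‖ ^ ((1/8:ℝ)) :=
      Real.rpow_le_rpow (by positivity) hnorm (by norm_num)
    have hk : (199/200:ℝ) ≤ (if (2:ℤ_[2]) ∣ u then 1 else (199/200:ℝ)) := by
      split_ifs <;> norm_num
    have hWlb : ((1/2:ℝ)^n) ^ ((1/8:ℝ)) * (199/200) ≤ Wf u v := by
      unfold Wf
      apply mul_le_mul hrp hk (by norm_num)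
      exact norm_rpow_nonneg _
    have hden : (0:ℝ) < ((1/2:ℝ)^n) ^ ((1/8:ℝ)) := Real.rpow_pos_of_pos (by positivity) _
    unfold cL
    rw [div_mul_eq_mul_div, le_div_iff₀ hden]
    linarith [hWlb]
  intro u v
  unfold indC
  rcases Classical.em (u ∈ S) with hu | hu <;> rcases Classical.em (v ∈ S) with hv | hv
  · simp only [if_pos hu, if_pos hv, sub_self, abs_zero]
    exact mul_nonneg (cL_pos n).le (Wf_nonneg u v)
  · simp only [if_pos hu, if_neg hv, sub_zero, abs_one]
    exact main u v hu hv
  · simp only [if_neg hu, if_pos hv, zero_sub, abs_neg, abs_one]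
    -- need : 1 ≤ cL n * Wf u v with v ∈ S, u ∉ S
    have hd : ¬ (2:ℤ_[2])^n ∣ (u - v) := fun hdvd => hu (h v hv u hdvd)
    rw [pow_dvd_iff_norm_le] at hd
    push_neg at hd
    have hrp : ((1/2:ℝ)^n) ^ ((1/8:ℝ)) ≤ ‖u - v‖ ^ ((1/8:ℝ)) :=
      Real.rpow_le_rpow (by positivity) hd.le (by norm_num)
    have hk : (199/200:ℝ) ≤ (if (2:ℤ_[2]) ∣ u then 1 else (199/200:ℝ)) := by
      split_ifs <;> norm_num
    have hWlb : ((1/2:ℝ)^n) ^ ((1/8:ℝ)) * (199/200) ≤ Wf u v := by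
      unfold Wf
      apply mul_le_mul hrp hk (by norm_num)
      exact norm_rpow_nonneg _
    have hden : (0:ℝ) < ((1/2:ℝ)^n) ^ ((1/8:ℝ)) := Real.rpow_pos_of_pos (by positivity) _
    unfold cL
    rw [div_mul_eq_mul_div, le_div_iff₀ hden]
    linarith [hWlb]
  · simp only [if_neg hu, if_neg hv, sub_self, abs_zero]
    exact mul_nonneg (cL_pos n).le (Wf_nonneg u v)

/-- balls (cosets) -/
def Bl (c : ℤ_[2]) (n : ℕ) : Set ℤ_[2] := {y | (2:ℤ_[2])^n ∣ (y - c)}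

lemma isCyl_Bl (c : ℤ_[2]) (n : ℕ) : IsCyl n (Bl c n) := by
  intro x hx y hd
  have : y - c = (y - x) + (x - c) := by ring
  rw [Bl, Set.mem_setOf_eq, this]
  exact dvd_add hd hx

lemma mem_Bl_self (c : ℤ_[2]) (n : ℕ) : c ∈ Bl c n := by
  simp [Bl]

-- preimages of cylinders under the 12 step maps
lemma dvd_parity_iff {x y : ℤ_[2]} (h : (2:ℤ_[2]) ∣ (y - x)) :
    ((2:ℤ_[2]) ∣ x ↔ (2:ℤ_[2]) ∣ y) := by
  constructor
  · intro hx
    have := dvd_add h hx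
    simpa using this
  · intro hy
    have := dvd_sub hy h
    simpa using this

lemma isCyl_step_preimage {n : ℕ} {B : Set ℤ_[2]} (hB : IsCyl n B) (j : Fin 12) :
    IsCyl (n+1) {x : ℤ_[2] | step x j ∈ B} := by
  intro x hx y hd
  have hd2 : (2:ℤ_[2]) ∣ (y - x) := dvd_trans (dvd_pow_self 2 (Nat.succ_ne_zero n)) hd
  have hdn : (2:ℤ_[2])^n ∣ (y - x) := dvd_trans (pow_dvd_pow 2 (Nat.le_succ n)) hd
  have hpar := dvd_parity_iff hd2
  simp only [Set.mem_setOf_eq] at hx ⊢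
  rcases Classical.em ((2:ℤ_[2]) ∣ x) with hex | hex
  · have hey : (2:ℤ_[2]) ∣ y := hpar.1 hex
    unfold step at hx ⊢
    rw [if_pos hex] at hx
    rw [if_pos hey]
    split_ifs at hx ⊢ with h1 h2 h3
    · exact hB _ hx _ (by simpa using hdn)
    · exact hB _ hx _ (by simpa using hdn)
    · apply hB _ hx _
      have : 2*y - 2*x = 2*(y-x) := by ring
      rw [this]
      obtain ⟨u, hu⟩ := hd
      exact ⟨4*u, by rw [hu]; ring⟩
    · apply hB _ hx _
      have hhalf : half y - half x = half (y - x) := halfSub hey hex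
      obtain ⟨u, hu⟩ := hd
      have : half (y - x) = 2^n * u := by
        apply half_eq
        rw [hu]
        ring
      rw [hhalf, this]
      exact ⟨u, rfl⟩
  · have hey : ¬ (2:ℤ_[2]) ∣ y := fun hy => hex (hpar.2 hy)
    unfold step at hx ⊢
    rw [if_neg hex] at hx
    rw [if_neg hey]
    split_ifs at hx ⊢ with h1 h2
    · exact hB _ hx _ (by simpa using hdn)
    · exact hB _ hx _ (by simpa using hdn)
    · apply hB _ hx _
      have : 2*y - 2*x = 2*(y-x) := by ring
      rw [this]
      obtain ⟨u, hu⟩ := hd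
      exact ⟨4*u, by rw [hu]; ring⟩

-- ### Part 5 : kernel identities and stationarity bridges

lemma e12_3 : (12:ℝ≥0∞)⁻¹ * 3 = 4⁻¹ := by
  rw [show (12:ℝ≥0∞) = 3*4 by norm_num,
    ENNReal.mul_inv (Or.inl (by norm_num)) (Or.inl (by norm_num)),
    mul_comm (3:ℝ≥0∞)⁻¹, mul_assoc, ENNReal.inv_mul_cancel (by norm_num) (by norm_num), mul_one]

lemma e12_4 : (12:ℝ≥0∞)⁻¹ * 4 = 3⁻¹ := by
  rw [show (12:ℝ≥0∞) = 4*3 by norm_num,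
    ENNReal.mul_inv (Or.inl (by norm_num)) (Or.inl (by norm_num)),
    mul_comm (4:ℝ≥0∞)⁻¹, mul_assoc, ENNReal.inv_mul_cancel (by norm_num) (by norm_num), mul_one]

lemma primalK_apply (x : ℤ_[2]) {A : Set ℤ_[2]} (hA : MeasurableSet A) :
    primalK x A = (12:ℝ≥0∞)⁻¹ * ∑ j : Fin 12, Set.indicator A (1 : ℤ_[2] → ℝ≥0∞) (step x j) := by
  rcases Classical.em ((2:ℤ_[2]) ∣ x) with hx | hx
  · rw [primalK, if_pos hx, Measure.smul_apply, smul_eq_mul,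
      Measure.add_apply, Measure.add_apply, Measure.add_apply,
      Measure.dirac_apply' _ hA, Measure.dirac_apply' _ hA,
      Measure.dirac_apply' _ hA, Measure.dirac_apply' _ hA]
    simp only [Fin.sum_univ_succ, Fin.sum_univ_zero, step, if_pos hx]
    norm_num
    rw [show (4:ℝ≥0∞)⁻¹ = 12⁻¹*3 from e12_3.symm]
    ring
  · rw [primalK, if_neg hx, Measure.smul_apply, smul_eq_mul,
      Measure.add_apply, Measure.add_apply,
      Measure.dirac_apply' _ hA, Measure.dirac_apply' _ hA, Measure.dirac_apply' _ hA]
    simp only [Fin.sum_univ_succ, Fin.sum_univ_zero, step, if_neg hx]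
    norm_num
    rw [show (3:ℝ≥0∞)⁻¹ = 12⁻¹*4 from e12_4.symm]
    ring

lemma primalK_univ (x : ℤ_[2]) : primalK x Set.univ = 1 := by
  rw [primalK_apply x MeasurableSet.univ]
  simp only [Set.indicator_univ, Pi.one_apply]
  rw [Finset.sum_const]
  simp only [Finset.card_univ, Fintype.card_fin, nsmul_eq_mul]
  rw [mul_one]
  rw [show ((12:ℕ):ℝ≥0∞) = (12:ℝ≥0∞) by norm_num]
  exact ENNReal.inv_mul_cancel (by norm_num) (by norm_num)

lemma measurable_primalK : Measurable primalK := by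
  apply Measure.measurable_of_measurable_coe
  intro A hA
  simp_rw [primalK_apply _ hA]
  apply Measurable.const_mul
  apply Finset.measurable_sum
  intro j _
  exact (measurable_const.indicator hA).comp (measurable_step j)

lemma primalK_lintegral (x : ℤ_[2]) {g : ℤ_[2] → ℝ≥0∞} (hg : Measurable g) :
    ∫⁻ y, g y ∂(primalK x) = (12:ℝ≥0∞)⁻¹ * ∑ j : Fin 12, g (step x j) := by
  rcases Classical.em ((2:ℤ_[2]) ∣ x) with hx | hx
  · rw [primalK, if_pos hx, lintegral_smul_measure,
      lintegral_add_measure, lintegral_add_measure, lintegral_add_measure,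
      lintegral_dirac' _ hg, lintegral_dirac' _ hg, lintegral_dirac' _ hg, lintegral_dirac' _ hg]
    simp only [Fin.sum_univ_succ, Fin.sum_univ_zero, step, if_pos hx]
    norm_num
    rw [show (4:ℝ≥0∞)⁻¹ = 12⁻¹*3 from e12_3.symm]
    ring
  · rw [primalK, if_neg hx, lintegral_smul_measure,
      lintegral_add_measure, lintegral_add_measure,
      lintegral_dirac' _ hg, lintegral_dirac' _ hg, lintegral_dirac' _ hg]
    simp only [Fin.sum_univ_succ, Fin.sum_univ_zero, step, if_neg hx]
    norm_num
    rw [show (3:ℝ≥0∞)⁻¹ = 12⁻¹*4 from e12_4.symm]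
    ring

lemma stationary_bind {μ : Measure ℤ_[2]} (hs : IsStationaryPrimal μ) :
    μ.bind primalK = μ := by
  ext A hA
  rw [Measure.bind_apply hA measurable_primalK.aemeasurable]
  exact (hs A hA).symm

lemma stationary_lintegral {μ : Measure ℤ_[2]} (hs : IsStationaryPrimal μ)
    {g : ℤ_[2] → ℝ≥0∞} (hg : Measurable g) :
    ∫⁻ x, (12:ℝ≥0∞)⁻¹ * ∑ j : Fin 12, g (step x j) ∂μ = ∫⁻ x, g x ∂μ := by
  conv_rhs => rw [← stationary_bind hs]
  rw [Measure.lintegral_bind measurable_primalK.aemeasurable hg.aemeasurable]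
  apply lintegral_congr
  intro x
  rw [primalK_lintegral x hg]

-- real (Bochner) version
lemma stationary_integral_Qop {μ : Measure ℤ_[2]} [IsProbabilityMeasure μ]
    (hs : IsStationaryPrimal μ) {f : ℤ_[2] → ℝ} (hf : Measurable f)
    (h0 : ∀ x, 0 ≤ f x) (h1 : ∀ x, f x ≤ 1) :
    ∫ x, Qop f x ∂μ = ∫ x, f x ∂μ := by
  have hQm : Measurable (Qop f) := measurable_Qop hf
  have hQ0 : ∀ x, 0 ≤ Qop f x := fun x => (Qop_bounds (fun x => ⟨h0 x, h1 x⟩) x).1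
  have hofReal : ∀ x, ENNReal.ofReal (Qop f x)
      = (12:ℝ≥0∞)⁻¹ * ∑ j : Fin 12, ENNReal.ofReal (f (step x j)) := by
    intro x
    unfold Qop
    rw [ENNReal.ofReal_div_of_pos (by norm_num), ENNReal.ofReal_sum_of_nonneg (fun j _ => h0 _)]
    rw [div_eq_mul_inv, mul_comm]
    congr 1
    rw [show ENNReal.ofReal (12:ℝ) = (12:ℝ≥0∞) by norm_num]
  rw [integral_eq_lintegral_of_nonneg_ae (Filter.Eventually.of_forall hQ0)
      hQm.aestronglyMeasurable,
    integral_eq_lintegral_of_nonneg_ae (Filter.Eventually.of_forall h0)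
      hf.aestronglyMeasurable]
  congr 1
  have := stationary_lintegral hs (g := fun x => ENNReal.ofReal (f x))
    (hf.ennreal_ofReal)
  rw [← this]
  apply lintegral_congr
  intro x
  exact hofReal x

lemma stationary_integral_Qop_iter {μ : Measure ℤ_[2]} [IsProbabilityMeasure μ]
    (hs : IsStationaryPrimal μ) {f : ℤ_[2] → ℝ} (hf : Measurable f)
    (h0 : ∀ x, 0 ≤ f x) (h1 : ∀ x, f x ≤ 1) (N : ℕ) :
    ∫ x, Qop^[N] f x ∂μ = ∫ x, f x ∂μ := by
  induction N generalizing f with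
  | zero => simp
  | succ N ih =>
      rw [Function.iterate_succ_apply]
      rw [ih (measurable_Qop hf)
        (fun x => (Qop_bounds (fun x => ⟨h0 x, h1 x⟩) x).1)
        (fun x => (Qop_bounds (fun x => ⟨h0 x, h1 x⟩) x).2)]
      exact stationary_integral_Qop hs hf h0 h1

-- ### Part 6 : the ball family generates the Borel σ-algebra; uniqueness

def BallFam : Set (Set ℤ_[2]) := {S | ∃ (m n : ℕ), S = Bl (m : ℤ_[2]) n}

lemma Bl_subset_Bl {c₁ c₂ : ℤ_[2]} {n₁ n₂ : ℕ} (hn : n₁ ≤ n₂) {z : ℤ_[2]}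
    (h₁ : z ∈ Bl c₁ n₁) (h₂ : z ∈ Bl c₂ n₂) : Bl c₂ n₂ ⊆ Bl c₁ n₁ := by
  intro y hy
  have e : y - c₁ = (y - c₂) - (z - c₂) + (z - c₁) := by ring
  rw [Bl, Set.mem_setOf_eq, e]
  exact dvd_add (dvd_sub (dvd_trans (pow_dvd_pow 2 hn) hy) (dvd_trans (pow_dvd_pow 2 hn) h₂)) h₁

lemma isPiSystem_BallFam : IsPiSystem BallFam := by
  rintro S ⟨m₁, n₁, rfl⟩ T ⟨m₂, n₂, rfl⟩ hne
  obtain ⟨z, hz₁, hz₂⟩ := hne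
  rcases le_total n₁ n₂ with hn | hn
  · have hsub := Bl_subset_Bl hn hz₁ hz₂
    rw [Set.inter_eq_self_of_subset_right hsub]
    exact ⟨m₂, n₂, rfl⟩
  · have hsub := Bl_subset_Bl hn hz₂ hz₁
    rw [Set.inter_eq_self_of_subset_left hsub]
    exact ⟨m₁, n₁, rfl⟩

lemma appr_dvd (x : ℤ_[2]) (n : ℕ) : (2:ℤ_[2])^n ∣ (x - (x.appr n : ℤ_[2])) := by
  have h := PadicInt.appr_spec n x
  rw [Ideal.mem_span_singleton] at h
  have hc : ((2:ℕ):ℤ_[2]) = (2:ℤ_[2]) := by norm_num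
  rwa [hc] at h

lemma measurableSet_generate_of_isOpen {U : Set ℤ_[2]} (hU : IsOpen U) :
    MeasurableSet[MeasurableSpace.generateFrom BallFam] U := by
  have hrepr : U = ⋃ (p : ℕ × ℕ) (_ : Bl ((p.1 : ℤ_[2])) p.2 ⊆ U), Bl ((p.1 : ℤ_[2])) p.2 := by
    apply Set.Subset.antisymm
    · intro x hx
      obtain ⟨ε, hε, hball⟩ := Metric.isOpen_iff.1 hU x hx
      obtain ⟨n, hn⟩ := exists_pow_lt_of_lt_one hε (by norm_num : (1/2:ℝ) < 1)
      have hx_in : x ∈ Bl ((x.appr n : ℤ_[2])) n := appr_dvd x n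
      have hsub : Bl ((x.appr n : ℤ_[2])) n ⊆ U := by
        intro y hy
        apply hball
        rw [Metric.mem_ball, dist_eq_norm]
        have hdvd : (2:ℤ_[2])^n ∣ (y - x) := by
          have e : y - x = (y - (x.appr n : ℤ_[2])) - (x - (x.appr n : ℤ_[2])) := by ring
          rw [e]
          exact dvd_sub hy (appr_dvd x n)
        calc ‖y - x‖ ≤ (1/2:ℝ)^n := pow_dvd_iff_norm_le.1 hdvd
          _ < ε := hn
      exact Set.mem_iUnion.2 ⟨(x.appr n, n), Set.mem_iUnion.2 ⟨hsub, hx_in⟩⟩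
    · intro x hx
      obtain ⟨p, hp⟩ := Set.mem_iUnion.1 hx
      obtain ⟨hsub, hmem⟩ := Set.mem_iUnion.1 hp
      exact hsub hmem
  rw [hrepr]
  apply MeasurableSet.iUnion
  intro p
  apply MeasurableSet.iUnion
  intro _
  exact MeasurableSpace.measurableSet_generateFrom ⟨p.1, p.2, rfl⟩

lemma borel_eq_BallFam :
    (inferInstance : MeasurableSpace ℤ_[2]) = MeasurableSpace.generateFrom BallFam := by
  apply le_antisymm
  · rw [BorelSpace.measurable_eq (α := ℤ_[2]), borel]
    apply MeasurableSpace.generateFrom_le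
    intro U hU
    exact measurableSet_generate_of_isOpen hU
  · apply MeasurableSpace.generateFrom_le
    rintro S ⟨m, n, rfl⟩
    exact (isCyl_Bl _ n).measurableSet

lemma indC_eq_indicator (S : Set ℤ_[2]) :
    indC S = Set.indicator S (fun _ => (1:ℝ)) := by
  funext x
  rw [indC, Set.indicator_apply]

lemma integral_indC {μ : Measure ℤ_[2]} {S : Set ℤ_[2]} (hS : MeasurableSet S) :
    ∫ x, indC S x ∂μ = (μ S).toReal := by
  rw [indC_eq_indicator, integral_indicator_const (1:ℝ) hS]
  simp
  rfl

lemma measurable_indC {S : Set ℤ_[2]} (hS : MeasurableSet S) : Measurable (indC S) := by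
  rw [indC_eq_indicator]
  exact measurable_const.indicator hS

/-- main uniqueness estimate -/
lemma measure_Bl_eq {μ ν : Measure ℤ_[2]} [IsProbabilityMeasure μ] [IsProbabilityMeasure ν]
    (hμ : IsStationaryPrimal μ) (hν : IsStationaryPrimal ν) (c : ℤ_[2]) (n : ℕ) :
    μ (Bl c n) = ν (Bl c n) := by
  set B := Bl c n with hB
  have hBmeas : MeasurableSet B := (isCyl_Bl c n).measurableSet
  set f := indC B with hf
  have hfm : Measurable f := measurable_indC hBmeas
  have hf0 : ∀ x, 0 ≤ f x := indC_nonneg B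
  have hf1 : ∀ x, f x ≤ 1 := indC_le_one B
  have key_bound : ∀ N : ℕ,
      |(μ B).toReal - (ν B).toReal| ≤ lam ^ N * cL n := by
    intro N
    set g := Qop^[N] f with hg
    have hgm : Measurable g := measurable_Qop_iter hfm N
    have hgb : ∀ x, 0 ≤ g x ∧ g x ≤ 1 := Qop_iter_bounds (fun x => ⟨hf0 x, hf1 x⟩) N
    have hglip : WLip (lam ^ N * cL n) g :=
      (indC_wlip (isCyl_Bl c n)).qop_iter (cL_pos n).le N
    have hgdiff : ∀ x y, |g x - g y| ≤ lam ^ N * cL n := by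
      intro x y
      calc |g x - g y| ≤ (lam ^ N * cL n) * Wf x y := hglip x y
        _ ≤ (lam ^ N * cL n) * 1 := by
            apply mul_le_mul_of_nonneg_left (Wf_le_one x y)
            exact mul_nonneg (pow_nonneg lam_pos.le N) (cL_pos n).le
        _ = lam ^ N * cL n := by ring
    have hμint : ∫ x, g x ∂μ = (μ B).toReal := by
      rw [hg, stationary_integral_Qop_iter hμ hfm hf0 hf1 N, hf, integral_indC hBmeas]
    have hνint : ∫ x, g x ∂ν = (ν B).toReal := by
      rw [hg, stationary_integral_Qop_iter hν hfm hf0 hf1 N, hf, integral_indC hBmeas]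
    have hg_int_μ : Integrable g μ := by
      apply Integrable.mono' (integrable_const (1:ℝ)) hgm.aestronglyMeasurable
      apply Filter.Eventually.of_forall
      intro x
      rw [Real.norm_eq_abs, abs_le]
      exact ⟨by linarith [(hgb x).1], (hgb x).2⟩
    have hg_int_ν : Integrable g ν := by
      apply Integrable.mono' (integrable_const (1:ℝ)) hgm.aestronglyMeasurable
      apply Filter.Eventually.of_forall
      intro x
      rw [Real.norm_eq_abs, abs_le]
      exact ⟨by linarith [(hgb x).1], (hgb x).2⟩
    -- pointwise : |g x - ∫ g dν| ≤ bound
    have hpt : ∀ x, |g x - ∫ y, g y ∂ν| ≤ lam ^ N * cL n := by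
      intro x
      have : g x - ∫ y, g y ∂ν = ∫ y, (g x - g y) ∂ν := by
        rw [integral_sub (integrable_const _) hg_int_ν, integral_const]
        simp
      rw [this, ← Real.norm_eq_abs]
      calc ‖∫ y, (g x - g y) ∂ν‖ ≤ (lam ^ N * cL n) * (ν Set.univ).toReal := by
            apply norm_integral_le_of_norm_le_const
            apply Filter.Eventually.of_forall
            intro y
            rw [Real.norm_eq_abs]
            exact hgdiff x y
        _ = lam ^ N * cL n := by simp
    have hdiff : (μ B).toReal - (ν B).toReal = ∫ x, (g x - ∫ y, g y ∂ν) ∂μ := by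
      rw [integral_sub hg_int_μ (integrable_const _), integral_const, hμint, hνint]
      simp
    rw [hdiff, ← Real.norm_eq_abs]
    calc ‖∫ x, (g x - ∫ y, g y ∂ν) ∂μ‖ ≤ (lam ^ N * cL n) * (μ Set.univ).toReal := by
          apply norm_integral_le_of_norm_le_const
          apply Filter.Eventually.of_forall
          intro x
          rw [Real.norm_eq_abs]
          exact hpt x
      _ = lam ^ N * cL n := by simp
  have htend : Filter.Tendsto (fun N : ℕ => lam ^ N * cL n) Filter.atTop (nhds 0) := by
    rw [show (0:ℝ) = 0 * cL n by ring]
    apply Filter.Tendsto.mul_const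
    apply tendsto_pow_atTop_nhds_zero_of_lt_one lam_pos.le lam_lt_one
  have habs : |(μ B).toReal - (ν B).toReal| ≤ 0 :=
    ge_of_tendsto htend (Filter.Eventually.of_forall key_bound)
  have heq : (μ B).toReal = (ν B).toReal := by
    have := abs_nonneg ((μ B).toReal - (ν B).toReal)
    have h0 : |(μ B).toReal - (ν B).toReal| = 0 := le_antisymm habs this
    rw [abs_eq_zero] at h0
    linarith
  exact (ENNReal.toReal_eq_toReal_iff' (measure_ne_top μ B) (measure_ne_top ν B)).1 heq

theorem stationary_unique {μ ν : Measure ℤ_[2]} [IsProbabilityMeasure μ] [IsProbabilityMeasure ν]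
    (hμ : IsStationaryPrimal μ) (hν : IsStationaryPrimal ν) : μ = ν := by
  apply MeasureTheory.ext_of_generate_finite BallFam borel_eq_BallFam isPiSystem_BallFam
  · rintro S ⟨m, n, rfl⟩
    exact measure_Bl_eq hμ hν _ n
  · simp

-- ### Part 7a : the limit functional

noncomputable def QL (f : ℤ_[2] → ℝ) : ℕ → ℝ := fun N => Qop^[N] f 0

noncomputable def Lim (f : ℤ_[2] → ℝ) : ℝ := Filter.limUnder Filter.atTop (QL f)

lemma QL_succ_diff {c : ℝ} {f : ℤ_[2] → ℝ} (hW : WLip c f) (hc : 0 ≤ c) (N : ℕ) :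
    |QL f (N+1) - QL f N| ≤ c * lam ^ N := by
  set g := Qop^[N] f with hg
  have hglip : WLip (lam ^ N * c) g := hW.qop_iter hc N
  have h1 : QL f (N+1) = Qop g 0 := by
    rw [QL, Function.iterate_succ_apply', hg]
  have h2 : QL f N = g 0 := rfl
  rw [h1, h2]
  have hsplit : Qop g 0 - g 0 = (∑ j : Fin 12, (g (step 0 j) - g 0)) / 12 := by
    unfold Qop
    rw [Finset.sum_sub_distrib]
    simp only [Finset.sum_const, Finset.card_univ, Fintype.card_fin, nsmul_eq_mul]
    ring
  rw [hsplit, abs_div]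
  rw [abs_of_nonneg (show (0:ℝ) ≤ 12 by norm_num), div_le_iff₀ (by norm_num : (0:ℝ) < 12)]
  calc |∑ j : Fin 12, (g (step 0 j) - g 0)| ≤ ∑ j : Fin 12, |g (step 0 j) - g 0| :=
        Finset.abs_sum_le_sum_abs _ _
    _ ≤ ∑ _j : Fin 12, lam ^ N * c := by
        apply Finset.sum_le_sum
        intro j _
        calc |g (step 0 j) - g 0| ≤ (lam ^ N * c) * Wf (step 0 j) 0 := hglip _ _
          _ ≤ (lam ^ N * c) * 1 := by
              apply mul_le_mul_of_nonneg_left (Wf_le_one _ _)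
              exact mul_nonneg (pow_nonneg lam_pos.le N) hc
          _ = lam ^ N * c := by ring
    _ = c * lam ^ N * 12 := by
        rw [Finset.sum_const]
        simp only [Finset.card_univ, Fintype.card_fin, nsmul_eq_mul]
        ring

lemma QL_cauchy {c : ℝ} {f : ℤ_[2] → ℝ} (hW : WLip c f) (hc : 0 ≤ c) :
    CauchySeq (QL f) := by
  apply cauchySeq_of_le_geometric lam c lam_lt_one
  intro n
  rw [Real.dist_eq, abs_sub_comm]
  exact QL_succ_diff hW hc n

lemma QL_tendsto {c : ℝ} {f : ℤ_[2] → ℝ} (hW : WLip c f) (hc : 0 ≤ c) :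
    Filter.Tendsto (QL f) Filter.atTop (nhds (Lim f)) := by
  unfold Lim
  exact (QL_cauchy hW hc).tendsto_limUnder

/-- bundled "nice function" predicate -/
def Nice (f : ℤ_[2] → ℝ) : Prop := ∃ c : ℝ, 0 ≤ c ∧ WLip c f

lemma Nice.tendsto {f : ℤ_[2] → ℝ} (h : Nice f) :
    Filter.Tendsto (QL f) Filter.atTop (nhds (Lim f)) := by
  obtain ⟨c, hc, hW⟩ := h
  exact QL_tendsto hW hc

lemma nice_indC {n : ℕ} {S : Set ℤ_[2]} (h : IsCyl n S) : Nice (indC S) :=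
  ⟨cL n, (cL_pos n).le, indC_wlip h⟩

lemma nice_const (r : ℝ) : Nice (fun _ => r) := by
  refine ⟨0, le_refl 0, ?_⟩
  intro u v
  simp

lemma Qop_iter_add (f g : ℤ_[2] → ℝ) (N : ℕ) :
    Qop^[N] (fun x => f x + g x) = fun x => Qop^[N] f x + Qop^[N] g x := by
  induction N generalizing f g with
  | zero => simp
  | succ N ih =>
      rw [Function.iterate_succ_apply, Function.iterate_succ_apply,
        Function.iterate_succ_apply, Qop_add, ih]

lemma Qop_const (r : ℝ) : Qop (fun _ => r) = fun _ => r := by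
  funext x
  unfold Qop
  rw [Finset.sum_const]
  simp only [Finset.card_univ, Fintype.card_fin, nsmul_eq_mul]
  ring

lemma Qop_iter_const (r : ℝ) (N : ℕ) : Qop^[N] (fun _ => r) = fun _ => r := by
  induction N with
  | zero => simp
  | succ N ih => rw [Function.iterate_succ_apply, Qop_const, ih]

lemma Lim_const (r : ℝ) : Lim (fun _ => r) = r := by
  unfold Lim
  apply Filter.Tendsto.limUnder_eq
  have : QL (fun _ => r) = fun _ => r := by
    funext N
    rw [QL, Qop_iter_const]
  rw [this]
  exact tendsto_const_nhds

lemma Lim_add {f g : ℤ_[2] → ℝ} (hf : Nice f) (hg : Nice g) :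
    Lim (fun x => f x + g x) = Lim f + Lim g := by
  unfold Lim
  apply Filter.Tendsto.limUnder_eq
  have : QL (fun x => f x + g x) = fun N => QL f N + QL g N := by
    funext N
    rw [QL, Qop_iter_add]
    rfl
  rw [this]
  exact (hf.tendsto).add (hg.tendsto)

lemma Qop_iter_mono {f g : ℤ_[2] → ℝ} (h : ∀ x, f x ≤ g x) (N : ℕ) :
    ∀ x, Qop^[N] f x ≤ Qop^[N] g x := by
  induction N generalizing f g with
  | zero => simpa using h
  | succ N ih =>
      rw [Function.iterate_succ_apply, Function.iterate_succ_apply]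
      exact ih (Qop_mono h)

lemma Lim_mono {f g : ℤ_[2] → ℝ} (hf : Nice f) (hg : Nice g) (h : ∀ x, f x ≤ g x) :
    Lim f ≤ Lim g := by
  apply le_of_tendsto_of_tendsto hf.tendsto hg.tendsto
  apply Filter.Eventually.of_forall
  intro N
  exact Qop_iter_mono h N 0

lemma Lim_Qop {f : ℤ_[2] → ℝ} (hf : Nice f) : Lim (Qop f) = Lim f := by
  conv_lhs => rw [Lim]
  apply Filter.Tendsto.limUnder_eq
  have : QL (Qop f) = fun N => QL f (N+1) := by
    funext N
    rw [QL, QL, ← Function.iterate_succ_apply]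
  rw [this]
  exact hf.tendsto.comp (Filter.tendsto_add_atTop_nat 1)

lemma Qop_iter_finsum {ι : Type*} (s : Finset ι) (F : ι → ℤ_[2] → ℝ) (N : ℕ) :
    Qop^[N] (fun x => ∑ j ∈ s, F j x) = fun x => ∑ j ∈ s, Qop^[N] (F j) x := by
  classical
  induction s using Finset.induction_on with
  | empty => simp [Qop_iter_const]
  | @insert a s hnotmem ih =>
      have h1 : (fun x => ∑ j ∈ insert a s, F j x)
          = fun x => F a x + ∑ j ∈ s, F j x := by
        funext x
        rw [Finset.sum_insert hnotmem]
      rw [h1, Qop_iter_add, ih]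
      funext x
      rw [Finset.sum_insert hnotmem]

lemma Qop_iter_div (f : ℤ_[2] → ℝ) (r : ℝ) (N : ℕ) :
    Qop^[N] (fun x => f x / r) = fun x => Qop^[N] f x / r := by
  induction N generalizing f with
  | zero => simp
  | succ N ih =>
      rw [Function.iterate_succ_apply, Function.iterate_succ_apply]
      have : Qop (fun x => f x / r) = fun x => Qop f x / r := by
        funext x
        unfold Qop
        rw [← Finset.sum_div]
        ring
      rw [this, ih]

-- ### Part 7b : the limit set-function on cylinders

noncomputable def pfn (S : Set ℤ_[2]) : ℝ := Lim (indC S)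

lemma pfn_univ : pfn Set.univ = 1 := by
  have : indC (Set.univ : Set ℤ_[2]) = fun _ => (1:ℝ) := by
    funext x
    simp [indC]
  rw [pfn, this, Lim_const]

lemma pfn_empty : pfn ∅ = 0 := by
  have : indC (∅ : Set ℤ_[2]) = fun _ => (0:ℝ) := by
    funext x
    simp [indC]
  rw [pfn, this, Lim_const]

lemma pfn_nonneg {n : ℕ} {S : Set ℤ_[2]} (h : IsCyl n S) : 0 ≤ pfn S := by
  have h1 : Lim (fun _ => (0:ℝ)) ≤ Lim (indC S) :=
    Lim_mono (nice_const 0) (nice_indC h) (fun x => indC_nonneg S x)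
  rwa [Lim_const] at h1

lemma pfn_le_one {n : ℕ} {S : Set ℤ_[2]} (h : IsCyl n S) : pfn S ≤ 1 := by
  have h1 : Lim (indC S) ≤ Lim (fun _ => (1:ℝ)) :=
    Lim_mono (nice_indC h) (nice_const 1) (fun x => indC_le_one S x)
  rwa [Lim_const] at h1

lemma pfn_mono {n m : ℕ} {S T : Set ℤ_[2]} (hS : IsCyl n S) (hT : IsCyl m T)
    (h : S ⊆ T) : pfn S ≤ pfn T := by
  apply Lim_mono (nice_indC hS) (nice_indC hT)
  intro x
  unfold indC
  split_ifs with h1 h2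
  · norm_num
  · exact absurd (h h1) h2
  · norm_num
  · norm_num

lemma pfn_union_disjoint {n m : ℕ} {S T : Set ℤ_[2]} (hS : IsCyl n S) (hT : IsCyl m T)
    (h : Disjoint S T) : pfn (S ∪ T) = pfn S + pfn T := by
  have hind : indC (S ∪ T) = fun x => indC S x + indC T x := by
    funext x
    unfold indC
    rcases Classical.em (x ∈ S) with hx | hx <;> rcases Classical.em (x ∈ T) with hy | hy
    · exact absurd (Set.disjoint_iff.1 h ⟨hx, hy⟩) (by simp)
    · simp [hx, hy]
    · simp [hx, hy]
    · simp [hx, hy]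
  rw [pfn, hind, Lim_add (nice_indC hS) (nice_indC hT)]
  rfl

lemma pfn_union_le {n m : ℕ} {S T : Set ℤ_[2]} (hS : IsCyl n S) (hT : IsCyl m T) :
    pfn (S ∪ T) ≤ pfn S + pfn T := by
  have h1 : ∀ x, indC (S ∪ T) x ≤ indC S x + indC T x := by
    intro x
    unfold indC
    rcases Classical.em (x ∈ S) with hx | hx <;> rcases Classical.em (x ∈ T) with hy | hy <;>
      simp [hx, hy] <;> norm_num
  have h2 : Lim (indC (S ∪ T)) ≤ Lim (fun x => indC S x + indC T x) := by
    apply Lim_mono (nice_indC ((hS.mono (le_max_left n m)).union (hT.mono (le_max_right n m))))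
      ?_ h1
    obtain ⟨c₁, hc₁, hW₁⟩ := nice_indC hS
    obtain ⟨c₂, hc₂, hW₂⟩ := nice_indC hT
    refine ⟨c₁ + c₂, by linarith, ?_⟩
    intro u v
    have := abs_add_le (indC S u - indC S v) (indC T u - indC T v)
    calc |indC S u + indC T u - (indC S v + indC T v)|
        = |(indC S u - indC S v) + (indC T u - indC T v)| := by ring_nf
      _ ≤ |indC S u - indC S v| + |indC T u - indC T v| := abs_add_le _ _
      _ ≤ c₁ * Wf u v + c₂ * Wf u v := add_le_add (hW₁ u v) (hW₂ u v)
      _ = (c₁ + c₂) * Wf u v := by ring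
  rw [pfn, pfn, pfn]
  rw [Lim_add (nice_indC hS) (nice_indC hT)] at h2
  exact h2

-- ### Part 7c : stationarity of pfn, the content, and the measure

lemma indC_step (S : Set ℤ_[2]) (j : Fin 12) (x : ℤ_[2]) :
    indC S (step x j) = indC {z : ℤ_[2] | step z j ∈ S} x := by
  simp only [indC, Set.mem_setOf_eq]

lemma pfn_step {n : ℕ} {S : Set ℤ_[2]} (h : IsCyl n S) :
    pfn S = (∑ j : Fin 12, pfn {z : ℤ_[2] | step z j ∈ S}) / 12 := by
  have hQop : Qop (indC S) = fun x => (∑ j : Fin 12, indC {z : ℤ_[2] | step z j ∈ S} x) / 12 := by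
    funext x
    unfold Qop
    simp only [indC_step]
  have h1 : pfn S = Lim (Qop (indC S)) := (Lim_Qop (nice_indC h)).symm
  rw [h1, hQop]
  apply Filter.Tendsto.limUnder_eq
  have hQL : QL (fun x => (∑ j : Fin 12, indC {z : ℤ_[2] | step z j ∈ S} x) / 12)
      = fun N => (∑ j : Fin 12, QL (indC {z : ℤ_[2] | step z j ∈ S}) N) / 12 := by
    funext N
    rw [QL, Qop_iter_div, Qop_iter_finsum]
    rfl
  rw [hQL]
  apply Filter.Tendsto.div_const
  apply tendsto_finset_sum
  intro j _
  exact (nice_indC (isCyl_step_preimage h j)).tendsto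

/-- the covering set of values used to define the content -/
def coverSet (K : Set ℤ_[2]) : Set ℝ≥0 :=
  {r | ∃ (S : Set ℤ_[2]) (n : ℕ), IsCyl n S ∧ K ⊆ S ∧ r = Real.toNNReal (pfn S)}

lemma coverSet_nonempty (K : Set ℤ_[2]) : (coverSet K).Nonempty :=
  ⟨Real.toNNReal (pfn Set.univ), Set.univ, 0, isCyl_univ 0, Set.subset_univ K, rfl⟩

noncomputable def contFn (K : TopologicalSpace.Compacts ℤ_[2]) : ℝ≥0 := sInf (coverSet K.1)

lemma contFn_le {K : TopologicalSpace.Compacts ℤ_[2]} {S : Set ℤ_[2]} {n : ℕ}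
    (hcyl : IsCyl n S) (hsub : K.1 ⊆ S) : contFn K ≤ Real.toNNReal (pfn S) :=
  csInf_le (OrderBot.bddBelow _) ⟨S, n, hcyl, hsub, rfl⟩

lemma contFn_congr {K L : TopologicalSpace.Compacts ℤ_[2]} (h : K.1 = L.1) :
    contFn K = contFn L := by
  unfold contFn
  rw [h]

lemma contFn_mono (K₁ K₂ : TopologicalSpace.Compacts ℤ_[2]) (h : K₁.1 ⊆ K₂.1) :
    contFn K₁ ≤ contFn K₂ := by
  apply csInf_le_csInf (OrderBot.bddBelow _) (coverSet_nonempty _)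
  rintro r ⟨S, n, hcyl, hsub, rfl⟩
  exact ⟨S, n, hcyl, h.trans hsub, rfl⟩

lemma contFn_empty {K : TopologicalSpace.Compacts ℤ_[2]} (h : K.1 = ∅) : contFn K = 0 := by
  apply le_antisymm _ (zero_le)
  have h1 : contFn K ≤ Real.toNNReal (pfn ∅) :=
    contFn_le (isCyl_empty 0) (by rw [h])
  rwa [pfn_empty, Real.toNNReal_zero] at h1

lemma contFn_sup_le (K₁ K₂ : TopologicalSpace.Compacts ℤ_[2]) :
    contFn (K₁ ⊔ K₂) ≤ contFn K₁ + contFn K₂ := by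
  apply le_of_forall_pos_le_add
  intro ε hε
  have hε2 : (0:ℝ≥0) < ε/2 := by positivity
  obtain ⟨r₁, hr₁mem, hr₁⟩ :=
    exists_lt_of_csInf_lt (coverSet_nonempty K₁.1) (lt_add_of_pos_right (contFn K₁) hε2)
  obtain ⟨r₂, hr₂mem, hr₂⟩ :=
    exists_lt_of_csInf_lt (coverSet_nonempty K₂.1) (lt_add_of_pos_right (contFn K₂) hε2)
  obtain ⟨S₁, n₁, hcyl₁, hsub₁, rfl⟩ := hr₁mem
  obtain ⟨S₂, n₂, hcyl₂, hsub₂, rfl⟩ := hr₂mem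
  have hcylU : IsCyl (max n₁ n₂) (S₁ ∪ S₂) :=
    (hcyl₁.mono (le_max_left _ _)).union (hcyl₂.mono (le_max_right _ _))
  have hsubU : (K₁ ⊔ K₂).1 ⊆ S₁ ∪ S₂ := Set.union_subset_union hsub₁ hsub₂
  have hle : contFn (K₁ ⊔ K₂) ≤ Real.toNNReal (pfn (S₁ ∪ S₂)) := contFn_le hcylU hsubU
  have hsubadd : pfn (S₁ ∪ S₂) ≤ pfn S₁ + pfn S₂ := pfn_union_le hcyl₁ hcyl₂
  have h2 : Real.toNNReal (pfn (S₁ ∪ S₂)) ≤ Real.toNNReal (pfn S₁) + Real.toNNReal (pfn S₂) :=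
    le_trans (Real.toNNReal_mono hsubadd) (Real.toNNReal_add_le)
  calc contFn (K₁ ⊔ K₂) ≤ Real.toNNReal (pfn S₁) + Real.toNNReal (pfn S₂) := hle.trans h2
    _ ≤ (contFn K₁ + ε/2) + (contFn K₂ + ε/2) := add_le_add hr₁.le hr₂.le
    _ = contFn K₁ + contFn K₂ + (ε/2 + ε/2) := by
        rw [add_add_add_comm]
    _ = contFn K₁ + contFn K₂ + ε := by rw [add_halves]

lemma exists_sep {K₁ K₂ : Set ℤ_[2]} (h₁ : IsCompact K₁) (h₂ : IsCompact K₂)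
    (hne₁ : K₁.Nonempty) (hne₂ : K₂.Nonempty) (hd : Disjoint K₁ K₂) :
    ∃ n : ℕ, ∀ x ∈ K₁, ∀ y ∈ K₂, ¬ ((2:ℤ_[2])^n ∣ (y - x)) := by
  obtain ⟨p, hpmem, hmin⟩ := (h₁.prod h₂).exists_isMinOn (hne₁.prod hne₂)
    (continuous_dist.continuousOn)
  have hp₁ : p.1 ∈ K₁ := hpmem.1
  have hp₂ : p.2 ∈ K₂ := hpmem.2
  have hne : p.1 ≠ p.2 := by
    intro hcontra
    exact Set.disjoint_left.1 hd hp₁ (hcontra ▸ hp₂)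
  have hdpos : 0 < dist p.1 p.2 := dist_pos.2 hne
  obtain ⟨n, hn⟩ := exists_pow_lt_of_lt_one hdpos (by norm_num : (1/2:ℝ) < 1)
  refine ⟨n, ?_⟩
  intro x hx y hy hdvd
  have hle : ‖y - x‖ ≤ (1/2:ℝ)^n := pow_dvd_iff_norm_le.1 hdvd
  have hdist : dist x y ≤ (1/2:ℝ)^n := by
    rw [dist_eq_norm, norm_sub_rev]
    exact hle
  have hminxy : dist p.1 p.2 ≤ dist x y := hmin (Set.mk_mem_prod hx hy)
  linarith

lemma contFn_sup_disjoint (K₁ K₂ : TopologicalSpace.Compacts ℤ_[2])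
    (hd : Disjoint (K₁ : Set ℤ_[2]) K₂) :
    contFn (K₁ ⊔ K₂) = contFn K₁ + contFn K₂ := by
  apply le_antisymm (contFn_sup_le K₁ K₂)
  rcases Set.eq_empty_or_nonempty K₁.1 with hK₁e | hne₁
  · rw [contFn_empty hK₁e, zero_add]
    apply contFn_mono
    exact Set.subset_union_right
  rcases Set.eq_empty_or_nonempty K₂.1 with hK₂e | hne₂
  · rw [contFn_empty hK₂e, add_zero]
    apply contFn_mono
    exact Set.subset_union_left
  obtain ⟨n, hsep⟩ := exists_sep K₁.2 K₂.2 hne₁ hne₂ hd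
  set U : Set ℤ_[2] := ⋃ x ∈ (K₁ : Set ℤ_[2]), Bl x n with hU
  have hUcyl : IsCyl n U := by
    intro z hz y hdvd
    rw [hU, Set.mem_iUnion₂] at hz ⊢
    obtain ⟨x, hx, hzx⟩ := hz
    refine ⟨x, hx, ?_⟩
    have e : y - x = (y - z) + (z - x) := by ring
    rw [Bl, Set.mem_setOf_eq, e]
    exact dvd_add hdvd hzx
  have hK₁U : (K₁ : Set ℤ_[2]) ⊆ U := by
    intro x hx
    rw [hU, Set.mem_iUnion₂]
    exact ⟨x, hx, mem_Bl_self x n⟩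
  have hK₂U : (K₂ : Set ℤ_[2]) ∩ U = ∅ := by
    ext y
    simp only [Set.mem_inter_iff, Set.mem_empty_iff_false, iff_false, not_and]
    intro hy hyU
    rw [hU, Set.mem_iUnion₂] at hyU
    obtain ⟨x, hx, hyx⟩ := hyU
    exact hsep x hx y hy hyx
  apply le_csInf (coverSet_nonempty _)
  rintro r ⟨S, m, hcyl, hsub, rfl⟩
  set nm := max n m with hnm
  have hS₁ : IsCyl nm (S ∩ U) :=
    (hcyl.mono (le_max_right _ _)).inter (hUcyl.mono (le_max_left _ _))
  have hS₂ : IsCyl nm (S ∩ Uᶜ) :=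
    (hcyl.mono (le_max_right _ _)).inter ((hUcyl.compl).mono (le_max_left _ _))
  have hsub₁ : (K₁ : Set ℤ_[2]) ⊆ S ∩ U := by
    intro x hx
    refine ⟨hsub ?_, hK₁U hx⟩
    exact Or.inl hx
  have hsub₂ : (K₂ : Set ℤ_[2]) ⊆ S ∩ Uᶜ := by
    intro y hy
    refine ⟨hsub ?_, ?_⟩
    · exact Or.inr hy
    · intro hyU
      have : y ∈ (K₂ : Set ℤ_[2]) ∩ U := ⟨hy, hyU⟩
      rw [hK₂U] at this
      exact this
  have h1 : contFn K₁ ≤ Real.toNNReal (pfn (S ∩ U)) := contFn_le hS₁ hsub₁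
  have h2 : contFn K₂ ≤ Real.toNNReal (pfn (S ∩ Uᶜ)) := contFn_le hS₂ hsub₂
  have hadd : pfn (S ∩ U) + pfn (S ∩ Uᶜ) = pfn S := by
    rw [← pfn_union_disjoint hS₁ hS₂]
    · rw [Set.inter_union_compl]
    · exact Disjoint.mono (Set.inter_subset_right) (Set.inter_subset_right)
        disjoint_compl_right
  calc contFn K₁ + contFn K₂
      ≤ Real.toNNReal (pfn (S ∩ U)) + Real.toNNReal (pfn (S ∩ Uᶜ)) := add_le_add h1 h2
    _ = Real.toNNReal (pfn (S ∩ U) + pfn (S ∩ Uᶜ)) :=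
        (Real.toNNReal_add (pfn_nonneg hS₁) (pfn_nonneg hS₂)).symm
    _ = Real.toNNReal (pfn S) := by rw [hadd]

/-- the content defined by the stationary limit functional -/
noncomputable def pkContent : Content ℤ_[2] where
  toFun := contFn
  mono' := contFn_mono
  sup_disjoint' := fun K₁ K₂ hd _ _ => contFn_sup_disjoint K₁ K₂ hd
  sup_le' := contFn_sup_le

/-- THE stationary measure -/
noncomputable def muP : Measure ℤ_[2] := pkContent.measure

lemma contFn_cyl {n : ℕ} {S : Set ℤ_[2]} (h : IsCyl n S) :
    contFn ⟨S, h.isCompact⟩ = Real.toNNReal (pfn S) := by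
  apply le_antisymm (contFn_le h (Set.Subset.refl S))
  apply le_csInf (coverSet_nonempty _)
  rintro r ⟨T, m, hcylT, hsub, rfl⟩
  exact Real.toNNReal_mono (pfn_mono h hcylT hsub)

lemma muP_cyl {n : ℕ} {S : Set ℤ_[2]} (h : IsCyl n S) :
    muP S = ENNReal.ofReal (pfn S) := by
  rw [muP, pkContent.measure_apply h.measurableSet,
    pkContent.outerMeasure_of_isOpen S h.isOpen]
  rw [Content.innerContent]
  apply le_antisymm
  · apply iSup₂_le
    intro K hK
    have : pkContent K ≤ (Real.toNNReal (pfn S) : ℝ≥0∞) := by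
      rw [pkContent, Content.mk_apply]
      exact ENNReal.coe_le_coe.2 (contFn_le h hK)
    exact this.trans_eq (by rw [ENNReal.ofReal])
  · have h1 : (pkContent ⟨S, h.isCompact⟩ : ℝ≥0∞) = ENNReal.ofReal (pfn S) := by
      rw [pkContent, Content.mk_apply]
      show ((contFn ⟨S, h.isCompact⟩ : ℝ≥0) : ℝ≥0∞) = _
      rw [contFn_cyl h, ENNReal.ofReal]
    rw [← h1]
    exact le_iSup₂ (α := ℝ≥0∞) (⟨S, h.isCompact⟩ : TopologicalSpace.Compacts ℤ_[2])
      (Set.Subset.refl S)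

instance muP_prob : IsProbabilityMeasure muP := by
  constructor
  rw [muP_cyl (isCyl_univ 0), pfn_univ]
  norm_num

-- ### Part 8 : stationarity of muP and the main theorem

lemma ennIndicator_step (B : Set ℤ_[2]) (j : Fin 12) (x : ℤ_[2]) :
    Set.indicator B (1 : ℤ_[2] → ℝ≥0∞) (step x j)
      = Set.indicator {z : ℤ_[2] | step z j ∈ B} (1 : ℤ_[2] → ℝ≥0∞) x := by
  simp only [Set.indicator, Set.mem_setOf_eq, Pi.one_apply]

lemma muP_bind : muP.bind primalK = muP := by
  have hbp : IsProbabilityMeasure (muP.bind primalK) := by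
    constructor
    rw [Measure.bind_apply MeasurableSet.univ measurable_primalK.aemeasurable]
    simp only [primalK_univ]
    rw [lintegral_one]
    simp
  apply MeasureTheory.ext_of_generate_finite BallFam borel_eq_BallFam isPiSystem_BallFam
  · rintro A ⟨m, n, rfl⟩
    set B := Bl ((m:ℕ) : ℤ_[2]) n with hBdef
    have hcyl : IsCyl n B := isCyl_Bl _ n
    have hBm : MeasurableSet B := hcyl.measurableSet
    rw [Measure.bind_apply hBm measurable_primalK.aemeasurable]
    have hpre_meas : ∀ j : Fin 12, Measurable
        (fun x => Set.indicator B (1 : ℤ_[2] → ℝ≥0∞) (step x j)) := by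
      intro j
      exact (measurable_const.indicator hBm).comp (measurable_step j)
    calc ∫⁻ x, primalK x B ∂muP
        = ∫⁻ x, (12:ℝ≥0∞)⁻¹ * ∑ j : Fin 12, Set.indicator B (1 : ℤ_[2] → ℝ≥0∞) (step x j) ∂muP :=
          lintegral_congr (fun x => primalK_apply x hBm)
      _ = (12:ℝ≥0∞)⁻¹ * ∫⁻ x, ∑ j : Fin 12, Set.indicator B (1 : ℤ_[2] → ℝ≥0∞) (step x j) ∂muP := by
          rw [lintegral_const_mul _ (Finset.measurable_sum _ (fun j _ => hpre_meas j))]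
      _ = (12:ℝ≥0∞)⁻¹ * ∑ j : Fin 12, ∫⁻ x, Set.indicator B (1 : ℤ_[2] → ℝ≥0∞) (step x j) ∂muP := by
          rw [lintegral_finset_sum _ (fun j _ => hpre_meas j)]
      _ = (12:ℝ≥0∞)⁻¹ * ∑ j : Fin 12, muP {z : ℤ_[2] | step z j ∈ B} := by
          congr 1
          apply Finset.sum_congr rfl
          intro j _
          have hrw : (fun x => Set.indicator B (1 : ℤ_[2] → ℝ≥0∞) (step x j))
              = Set.indicator {z : ℤ_[2] | step z j ∈ B} (1 : ℤ_[2] → ℝ≥0∞) := by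
            funext x
            exact ennIndicator_step B j x
          rw [hrw, lintegral_indicator_one (isCyl_step_preimage hcyl j).measurableSet]
      _ = (12:ℝ≥0∞)⁻¹ * ∑ j : Fin 12, ENNReal.ofReal (pfn {z : ℤ_[2] | step z j ∈ B}) := by
          congr 1
          apply Finset.sum_congr rfl
          intro j _
          exact muP_cyl (isCyl_step_preimage hcyl j)
      _ = (12:ℝ≥0∞)⁻¹ * ENNReal.ofReal (∑ j : Fin 12, pfn {z : ℤ_[2] | step z j ∈ B}) := by
          rw [ENNReal.ofReal_sum_of_nonneg]
          intro j _
          exact pfn_nonneg (isCyl_step_preimage hcyl j)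
      _ = ENNReal.ofReal ((∑ j : Fin 12, pfn {z : ℤ_[2] | step z j ∈ B}) / 12) := by
          rw [ENNReal.ofReal_div_of_pos (by norm_num : (0:ℝ) < 12)]
          rw [show ENNReal.ofReal (12:ℝ) = (12:ℝ≥0∞) by norm_num]
          rw [ENNReal.div_eq_inv_mul]
      _ = ENNReal.ofReal (pfn B) := by rw [← pfn_step hcyl]
      _ = muP B := (muP_cyl hcyl).symm
  · rw [Measure.bind_apply MeasurableSet.univ measurable_primalK.aemeasurable]
    simp [primalK_univ]

theorem muP_stationary : IsStationaryPrimal muP := by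
  intro A hA
  conv_lhs => rw [← muP_bind]
  rw [Measure.bind_apply hA measurable_primalK.aemeasurable]

end PK

theorem primal_stationary_exists_unique :
    ∃! μ : Measure ℤ_[2], IsProbabilityMeasure μ ∧ IsStationaryPrimal μ := by
  refine ⟨PK.muP, ⟨PK.muP_prob, PK.muP_stationary⟩, ?_⟩
  rintro ν ⟨hprob, hstat⟩
  haveI := hprob
  exact PK.stationary_unique hstat PK.muP_stationary
end

section
/- The Haar probability measure on ℤ₂ is stationary for the dual kernel K*. -/
open MeasureTheory
open scoped ENNReal Classical

/-- The digit shift `σ` on `ℤ₂`: `σ a = (a - r)/2` where `a ≡ r mod 2`, `r ∈ {0,1}`. -/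
noncomputable def shift (a : ℤ_[2]) : ℤ_[2] :=
  half (a - if (2 : ℤ_[2]) ∣ a then 0 else 1)

/-- The dual kernel `K*`. -/
noncomputable def dualK (a : ℤ_[2]) : Measure ℤ_[2] :=
  (5 : ℝ≥0∞)⁻¹ • (Measure.dirac (a + 1) + Measure.dirac (a - 1)
    + Measure.dirac (shift a) + Measure.dirac (2 * a) + Measure.dirac (2 * a + 1))

/-- Stationarity of a Borel measure on `ℤ₂` for the dual kernel. -/
def IsStationaryDual (μ : Measure ℤ_[2]) : Prop :=
  ∀ A : Set ℤ_[2], MeasurableSet A → μ A = ∫⁻ a, dualK a A ∂μ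

/-- The Haar probability measure on the compact additive group `ℤ₂`. -/
noncomputable def haarZ2 : Measure ℤ_[2] := Measure.addHaarMeasure ⊤


lemma dvd_iff_toZMod (a : ℤ_[2]) : (2:ℤ_[2]) ∣ a ↔ PadicInt.toZMod a = 0 := by
  rw [show ((2:ℤ_[2])) = ((2:ℕ):ℤ_[2]) by norm_num, ← Ideal.mem_span_singleton,
    ← PadicInt.maximalIdeal_eq_span_p, ← PadicInt.ker_toZMod, RingHom.mem_ker]

lemma parity (a : ℤ_[2]) : (2:ℤ_[2]) ∣ a ∨ (2:ℤ_[2]) ∣ (a-1) := by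
  rw [dvd_iff_toZMod, dvd_iff_toZMod, map_sub, map_one]
  have : ∀ x : ZMod 2, x = 0 ∨ x - 1 = 0 := by decide
  exact this _

lemma not_dvd_odd (b : ℤ_[2]) : ¬ (2:ℤ_[2]) ∣ (2*b+1) := by
  rw [dvd_iff_toZMod, map_add, map_mul, map_one]
  have h2 : (PadicInt.toZMod (2:ℤ_[2])) = 0 := by rw [← dvd_iff_toZMod]
  simp [h2]

lemma half_double (b : ℤ_[2]) : half (2*b) = b := by
  have h : (2:ℤ_[2]) ∣ 2*b := ⟨b, rfl⟩
  rw [half, dif_pos h]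
  have := h.choose_spec
  exact mul_left_cancel₀ (two_ne_zero) this.symm

lemma shift_double (b : ℤ_[2]) : shift (2*b) = b := by
  rw [shift, if_pos ⟨b, rfl⟩, sub_zero, half_double]

lemma shift_odd (b : ℤ_[2]) : shift (2*b+1) = b := by
  rw [shift, if_neg (not_dvd_odd b)]
  simpa using half_double b

lemma double_ne_odd (b c : ℤ_[2]) : 2*b ≠ 2*c+1 := by
  intro h
  exact not_dvd_odd c (h ▸ ⟨b, rfl⟩)

lemma shift_preimage (A : Set ℤ_[2]) :
    shift ⁻¹' A = (fun b => 2*b) '' A ∪ (fun b => 2*b+1) '' A := by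
  ext a
  simp only [Set.mem_preimage, Set.mem_union, Set.mem_image]
  constructor
  · intro h
    rcases parity a with ⟨c, hc⟩ | ⟨c, hc⟩
    · exact Or.inl ⟨shift a, by rw [hc, shift_double] at h ⊢; exact ⟨h, rfl⟩⟩
    · refine Or.inr ⟨shift a, ?_⟩
      have ha : a = 2*c+1 := by linear_combination hc
      rw [ha, shift_odd] at h ⊢
      exact ⟨h, rfl⟩
  · rintro (⟨b, hb, rfl⟩ | ⟨b, hb, rfl⟩) <;> simp [shift_double, shift_odd, hb]

lemma closedEmbedding_double : Topology.IsClosedEmbedding (fun b : ℤ_[2] => 2*b) := by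
  apply Continuous.isClosedEmbedding (by fun_prop)
  intro x y h
  exact mul_left_cancel₀ two_ne_zero h

lemma closedEmbedding_odd : Topology.IsClosedEmbedding (fun b : ℤ_[2] => 2*b+1) := by
  apply Continuous.isClosedEmbedding (by fun_prop)
  intro x y h
  simpa using mul_left_cancel₀ (two_ne_zero (α := ℤ_[2])) (by linear_combination h)

lemma measurable_shift : Measurable shift := by
  intro A hA
  rw [shift_preimage]
  exact (closedEmbedding_double.measurableEmbedding.measurableSet_image.2 hA).union
    (closedEmbedding_odd.measurableEmbedding.measurableSet_image.2 hA)


noncomputable def rho : Measure ℤ_[2] :=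
  (2 : ℝ≥0∞)⁻¹ • (haarZ2.map (fun b => 2*b) + haarZ2.map (fun b => 2*b+1))

lemma measurable_double : Measurable (fun b : ℤ_[2] => 2*b) := by fun_prop
lemma measurable_odd : Measurable (fun b : ℤ_[2] => 2*b+1) := by fun_prop

instance : Measure.IsAddLeftInvariant (haarZ2) := by
  unfold haarZ2; infer_instance

lemma map_shift_left (t : ℤ_[2]) : haarZ2.map (fun a => t + a) = haarZ2 :=
  map_add_left_eq_self haarZ2 t

lemma rho_invariant : ∀ t : ℤ_[2],
    ((haarZ2.map (fun b => 2*b) + haarZ2.map (fun b => 2*b+1))).map (fun a => t + a)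
      = haarZ2.map (fun b => 2*b) + haarZ2.map (fun b => 2*b+1) := by
  intro t
  rw [Measure.map_add _ _ (by fun_prop)]
  have h1 : ∀ s : ℤ_[2], (haarZ2.map (fun b => 2*b)).map (fun a => s + a)
      = haarZ2.map (fun b => s + 2*b) := by
    intro s
    rw [Measure.map_map (by fun_prop) measurable_double]
    rfl
  have h2 : ∀ s : ℤ_[2], (haarZ2.map (fun b => 2*b+1)).map (fun a => s + a)
      = haarZ2.map (fun b => s + (2*b+1)) := by
    intro s
    rw [Measure.map_map (by fun_prop) measurable_odd]
    rfl
  have key : ∀ (f : ℤ_[2] → ℤ_[2]) (s : ℤ_[2]), Measurable f →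
      haarZ2.map (fun b => f (s + b)) = haarZ2.map f := by
    intro f s hf
    conv_rhs => rw [← map_shift_left s]
    rw [Measure.map_map hf (by fun_prop)]
    rfl
  rcases parity t with ⟨s, hs⟩ | ⟨s, hs⟩
  · -- t = 2 s
    rw [h1 t, h2 t]
    have e1 : (fun b : ℤ_[2] => t + 2*b) = (fun b => 2*(s+b)) := by
      funext b; rw [hs]; ring
    have e2 : (fun b : ℤ_[2] => t + (2*b+1)) = (fun b => 2*(s+b)+1) := by
      funext b; rw [hs]; ring
    rw [e1, e2, key _ s measurable_double, key _ s measurable_odd]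
  · -- t = 2 s + 1
    have ht : t = 2*s + 1 := by linear_combination hs
    rw [h1 t, h2 t]
    have e1 : (fun b : ℤ_[2] => t + 2*b) = (fun b => 2*(s+b)+1) := by
      funext b; rw [ht]; ring
    have e2 : (fun b : ℤ_[2] => t + (2*b+1)) = (fun b => 2*((s+1)+b)) := by
      funext b; rw [ht]; ring
    rw [e1, e2, key _ s measurable_odd, key _ (s+1) measurable_double, add_comm]

instance : MeasureTheory.IsProbabilityMeasure (haarZ2) := by
  constructor
  have : (⊤ : TopologicalSpace.PositiveCompacts ℤ_[2]).carrier = Set.univ := rfl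
  simpa [this, haarZ2] using Measure.addHaarMeasure_self (K₀ := (⊤ : TopologicalSpace.PositiveCompacts ℤ_[2]))

instance : MeasureTheory.IsProbabilityMeasure rho := by
  constructor
  rw [rho, Measure.smul_apply, Measure.add_apply,
    Measure.map_apply measurable_double MeasurableSet.univ,
    Measure.map_apply measurable_odd MeasurableSet.univ]
  simp only [Set.preimage_univ, measure_univ, smul_eq_mul]
  rw [← two_mul, ← mul_assoc, ENNReal.inv_mul_cancel (by norm_num) (by norm_num), one_mul]

instance : Measure.IsAddLeftInvariant rho := by
  constructor
  intro t
  rw [rho, Measure.map_smul, rho_invariant t]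

lemma rho_eq : rho = haarZ2 := by
  have h := Measure.addHaarMeasure_unique rho (⊤ : TopologicalSpace.PositiveCompacts ℤ_[2])
  have htop : rho (⊤ : TopologicalSpace.PositiveCompacts ℤ_[2]) = 1 := by
    have : ((⊤ : TopologicalSpace.PositiveCompacts ℤ_[2]) : Set ℤ_[2]) = Set.univ := rfl
    rw [this]; exact measure_univ
  rw [htop, one_smul] at h
  exact h

lemma indicator_meas {A : Set ℤ_[2]} (hA : MeasurableSet A) :
    Measurable (A.indicator (fun _ => (1:ℝ≥0∞))) :=
  measurable_const.indicator hA

lemma map_double_add_map_odd {A : Set ℤ_[2]} (hA : MeasurableSet A) :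
    haarZ2 ((fun b : ℤ_[2] => 2*b) ⁻¹' A) + haarZ2 ((fun b : ℤ_[2] => 2*b+1) ⁻¹' A)
      = 2 * haarZ2 A := by
  have h := congrArg (fun m : Measure ℤ_[2] => m A) rho_eq
  simp only [rho, Measure.smul_apply, Measure.add_apply,
    Measure.map_apply measurable_double hA, Measure.map_apply measurable_odd hA,
    smul_eq_mul] at h
  rw [← h, ← mul_assoc, ENNReal.mul_inv_cancel (by norm_num) (by norm_num), one_mul]

lemma measure_double_image {A : Set ℤ_[2]} (hA : MeasurableSet A) :
    haarZ2 ((fun b : ℤ_[2] => 2*b) '' A) = 2⁻¹ * haarZ2 A := by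
  have hm : MeasurableSet ((fun b : ℤ_[2] => 2*b) '' A) :=
    closedEmbedding_double.measurableEmbedding.measurableSet_image.2 hA
  have h := congrArg (fun m : Measure ℤ_[2] => m ((fun b : ℤ_[2] => 2*b) '' A)) rho_eq
  simp only [rho, Measure.smul_apply, Measure.add_apply,
    Measure.map_apply measurable_double hm, Measure.map_apply measurable_odd hm,
    smul_eq_mul] at h
  have h1 : (fun b : ℤ_[2] => 2*b) ⁻¹' ((fun b : ℤ_[2] => 2*b) '' A) = A :=
    Set.preimage_image_eq A (fun x y h => mul_left_cancel₀ two_ne_zero h)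
  have h2 : (fun b : ℤ_[2] => 2*b+1) ⁻¹' ((fun b : ℤ_[2] => 2*b) '' A) = ∅ := by
    ext a
    simp only [Set.mem_preimage, Set.mem_image, Set.mem_empty_iff_false, iff_false]
    rintro ⟨b, _, hb⟩
    exact double_ne_odd b a hb
  rw [h1, h2] at h
  rw [← h]
  simp

lemma measure_odd_image {A : Set ℤ_[2]} (hA : MeasurableSet A) :
    haarZ2 ((fun b : ℤ_[2] => 2*b+1) '' A) = 2⁻¹ * haarZ2 A := by
  have : (fun b : ℤ_[2] => 2*b+1) '' A = (fun a : ℤ_[2] => a + 1) '' ((fun b : ℤ_[2] => 2*b) '' A) := by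
    rw [Set.image_image]
  rw [this]
  have hm : MeasurableSet ((fun b : ℤ_[2] => 2*b) '' A) :=
    closedEmbedding_double.measurableEmbedding.measurableSet_image.2 hA
  have himg : (fun a : ℤ_[2] => a + 1) '' ((fun b : ℤ_[2] => 2*b) '' A)
      = (fun a : ℤ_[2] => a - 1) ⁻¹' ((fun b : ℤ_[2] => 2*b) '' A) := by
    ext x
    simp only [Set.mem_image, Set.mem_preimage]
    constructor
    · rintro ⟨y, hy, rfl⟩; simpa using hy
    · intro hx; exact ⟨x - 1, hx, by ring⟩
  rw [himg]
  have : haarZ2 ((fun a : ℤ_[2] => a - 1) ⁻¹' ((fun b : ℤ_[2] => 2*b) '' A))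
      = haarZ2 ((fun b : ℤ_[2] => 2*b) '' A) := by
    have : (fun a : ℤ_[2] => a - 1) = (fun a : ℤ_[2] => (-1) + a) := by
      funext a; ring
    rw [this, ← Measure.map_apply (by fun_prop) hm, map_shift_left]
  rw [this, measure_double_image hA]

lemma measure_shift_preimage {A : Set ℤ_[2]} (hA : MeasurableSet A) :
    haarZ2 (shift ⁻¹' A) = haarZ2 A := by
  rw [shift_preimage]
  have hm1 : MeasurableSet ((fun b : ℤ_[2] => 2*b) '' A) :=
    closedEmbedding_double.measurableEmbedding.measurableSet_image.2 hA
  have hm2 : MeasurableSet ((fun b : ℤ_[2] => 2*b+1) '' A) :=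
    closedEmbedding_odd.measurableEmbedding.measurableSet_image.2 hA
  have hdisj : Disjoint ((fun b : ℤ_[2] => 2*b) '' A) ((fun b : ℤ_[2] => 2*b+1) '' A) := by
    rw [Set.disjoint_left]
    rintro x ⟨b, _, rfl⟩ ⟨c, _, hc⟩
    exact double_ne_odd b c hc.symm
  rw [measure_union hdisj hm2, measure_double_image hA, measure_odd_image hA,
    ← two_mul, ← mul_assoc, ENNReal.mul_inv_cancel (by norm_num) (by norm_num), one_mul]

lemma measure_add_right_preimage (c : ℤ_[2]) {A : Set ℤ_[2]} (hA : MeasurableSet A) :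
    haarZ2 ((fun a : ℤ_[2] => a + c) ⁻¹' A) = haarZ2 A := by
  have : (fun a : ℤ_[2] => a + c) = (fun a : ℤ_[2] => c + a) := by funext a; ring
  rw [this, ← Measure.map_apply (by fun_prop) hA, map_shift_left]



theorem haar_stationary_for_dual : IsStationaryDual haarZ2 := by
  intro A hA
  have hind : ∀ (T : ℤ_[2] → ℤ_[2]) (a : ℤ_[2]),
      Measure.dirac (T a) A = ((T ⁻¹' A).indicator (fun _ => (1:ℝ≥0∞))) a := by
    intro T a
    rw [Measure.dirac_apply' _ hA]
    simp [Set.indicator, Set.mem_preimage]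
  have hfun : ∀ a : ℤ_[2], dualK a A =
      (5 : ℝ≥0∞)⁻¹ * ((((fun x : ℤ_[2] => x + 1) ⁻¹' A).indicator (fun _ => (1:ℝ≥0∞))) a
        + (((fun x : ℤ_[2] => x - 1) ⁻¹' A).indicator (fun _ => (1:ℝ≥0∞))) a
        + ((shift ⁻¹' A).indicator (fun _ => (1:ℝ≥0∞))) a
        + (((fun x : ℤ_[2] => 2 * x) ⁻¹' A).indicator (fun _ => (1:ℝ≥0∞))) a
        + (((fun x : ℤ_[2] => 2 * x + 1) ⁻¹' A).indicator (fun _ => (1:ℝ≥0∞))) a) := by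
    intro a
    rw [dualK, Measure.smul_apply, Measure.add_apply, Measure.add_apply, Measure.add_apply,
      Measure.add_apply, smul_eq_mul,
      hind (fun x => x + 1) a, hind (fun x => x - 1) a, hind shift a,
      hind (fun x => 2 * x) a, hind (fun x => 2 * x + 1) a]
  have hms : ∀ (T : ℤ_[2] → ℤ_[2]), Measurable T →
      Measurable ((T ⁻¹' A).indicator (fun _ => (1:ℝ≥0∞))) := by
    intro T hT
    exact measurable_const.indicator (hT hA)
  have hmeas_sub : Measurable (fun x : ℤ_[2] => x - 1) := by fun_prop
  have hmeas_add : Measurable (fun x : ℤ_[2] => x + 1) := by fun_prop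
  have hlin : ∀ (T : ℤ_[2] → ℤ_[2]), Measurable T →
      ∫⁻ a, ((T ⁻¹' A).indicator (fun _ => (1:ℝ≥0∞))) a ∂haarZ2 = haarZ2 (T ⁻¹' A) := by
    intro T hT
    rw [lintegral_indicator (hT hA)]
    simp
  symm
  rw [lintegral_congr hfun, lintegral_const_mul' _ _ (by norm_num),
    lintegral_add_left (by exact (((hms _ hmeas_add).add (hms _ hmeas_sub)).add
      ((hms shift measurable_shift)) |>.add (hms _ measurable_double))),
    lintegral_add_left (by exact (((hms _ hmeas_add).add (hms _ hmeas_sub)).add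
      (hms shift measurable_shift))),
    lintegral_add_left (by exact ((hms _ hmeas_add).add (hms _ hmeas_sub))),
    lintegral_add_left (hms _ hmeas_add),
    hlin _ hmeas_add, hlin _ hmeas_sub, hlin shift measurable_shift,
    hlin _ measurable_double, hlin _ measurable_odd]
  rw [measure_add_right_preimage 1 hA]
  have hsub : haarZ2 ((fun x : ℤ_[2] => x - 1) ⁻¹' A) = haarZ2 A := by
    have : (fun x : ℤ_[2] => x - 1) = (fun x : ℤ_[2] => x + (-1)) := by funext x; ring
    rw [this, measure_add_right_preimage (-1) hA]
  rw [hsub, measure_shift_preimage hA, add_assoc (haarZ2 A + haarZ2 A + haarZ2 A),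
    map_double_add_map_odd hA]
  have hfin : haarZ2 A ≠ ⊤ := measure_ne_top _ _
  rw [two_mul]
  rw [show haarZ2 A + haarZ2 A + haarZ2 A + (haarZ2 A + haarZ2 A) = 5 * haarZ2 A by ring,
    ← mul_assoc, ENNReal.inv_mul_cancel (by norm_num) (by norm_num), one_mul]
end
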